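/- arXiv:0903.0757 — 5 statements merged into one kernel-verified Lean document; each statement's English description precedes it below -/
import Mathlib

section
/- Let μ1, μ2 ∈ (1, ∞) and γ1, γ2 > 0 with μ1^{γ1} = μ2^{γ2}. Then there exist constants c, C > 0 and t0 > 0 such that c < h̃_{μ1,γ1}(t)/h̃_{μ2,γ2}(t) < C for all 0 < t < t0. -/
open Filter Set Topology

/-!
Iterating `Φ̃_μ(x) = μ · Φ̃_μ(L_μ x)` gives `Φ̃_μ(x)^γ = (μ^γ)^n · Φ̃_μ(L_μ^n x)^γ`, and
`μ₁^{γ₁} = μ₂^{γ₂}` makes the scaling factors of the two gauges equal, so they cancel in the ratio.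
The iterates of `L_{μ₁}` and `L_{μ₂}` started at the same point stay within bounded distance of each
other, because `L_{μ₁}` is a `1/μ₁`-contraction on `[0, ∞)` and the two maps differ by at most
`|log μ₁ - log μ₂|`. Hence for `x = 1/t` large one can choose `n` so that both `L_{μ₁}^n x` and
`L_{μ₂}^n x` lie in a fixed window `[1, q]`, where the positive, monotone functions
`Φ̃_{μᵢ}^{γᵢ}` are bounded above and away from `0`.
-/

noncomputable def logMap (μ x : ℝ) : ℝ := Real.log (1 + x / μ)

section logMap

variable {μ x y : ℝ}

lemma logMap_eq_log_add_sub_log (hμ : 0 < μ) (hx : 0 ≤ x) :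
    logMap μ x = Real.log (μ + x) - Real.log μ := by
  rw [logMap, ← Real.log_div (by positivity) hμ.ne', add_div, div_self hμ.ne']

lemma logMap_nonneg (hμ : 0 < μ) (hx : 0 ≤ x) : 0 ≤ logMap μ x :=
  Real.log_nonneg (le_add_of_nonneg_right (div_nonneg hx hμ.le))

lemma logMap_le_div (hμ : 0 < μ) (hx : 0 ≤ x) : logMap μ x ≤ x / μ := by
  have := Real.log_le_sub_one_of_pos (show 0 < 1 + x / μ by positivity)
  rw [logMap]
  linarith

lemma div_mul_exp_neg_le_logMap (hμ : 0 < μ) (hx : 0 ≤ x) :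
    x / μ * Real.exp (-(x / μ)) ≤ logMap μ x := by
  set s := x / μ
  have hs : 0 ≤ s := div_nonneg hx hμ.le
  calc s * Real.exp (-s) ≤ s / (1 + s) := by
        rw [Real.exp_neg, ← div_eq_mul_inv]
        exact div_le_div_of_nonneg_left hs (by positivity) (by linarith [Real.add_one_le_exp s])
    _ = 1 - (1 + s)⁻¹ := by field_simp; ring
    _ ≤ logMap μ x := Real.one_sub_inv_le_log_of_pos (by positivity)

lemma logMap_le_logMap (hμ : 0 < μ) (hx : 0 ≤ x) (hxy : x ≤ y) : logMap μ x ≤ logMap μ y :=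
  Real.log_le_log (by positivity) (by gcongr)

lemma le_logMap_mul_exp (hμ : 0 < μ) (a : ℝ) : a ≤ logMap μ (μ * Real.exp a) := by
  rw [logMap, mul_div_cancel_left₀ _ hμ.ne', Real.le_log_iff_exp_le (by positivity)]
  linarith

lemma abs_logMap_sub_logMap_le (hμ : 0 < μ) (hx : 0 ≤ x) (hy : 0 ≤ y) :
    |logMap μ x - logMap μ y| ≤ |x - y| / μ := by
  wlog hyx : y ≤ x generalizing x y
  · rw [abs_sub_comm, abs_sub_comm x]
    exact this hy hx (by linarith)
  rw [abs_of_nonneg (sub_nonneg.2 (logMap_le_logMap hμ hy hyx)), abs_of_nonneg (sub_nonneg.2 hyx),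
    logMap_eq_log_add_sub_log hμ hx, logMap_eq_log_add_sub_log hμ hy, sub_sub_sub_cancel_right,
    ← Real.log_div (by positivity) (by positivity)]
  calc Real.log ((μ + x) / (μ + y)) ≤ (μ + x) / (μ + y) - 1 :=
        Real.log_le_sub_one_of_pos (by positivity)
    _ = (x - y) / (μ + y) := by field_simp; ring
    _ ≤ (x - y) / μ := by gcongr; linarith

lemma abs_logMap_sub_logMap_le_abs_log_sub {μ₁ μ₂ : ℝ} (h₁ : 0 < μ₁) (h₂ : 0 < μ₂) (hx : 0 ≤ x) :
    |logMap μ₁ x - logMap μ₂ x| ≤ |Real.log μ₁ - Real.log μ₂| := by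
  wlog h : μ₁ ≤ μ₂ generalizing μ₁ μ₂
  · rw [abs_sub_comm, abs_sub_comm (Real.log μ₁)]
    exact this h₂ h₁ (by linarith)
  have hL : logMap μ₂ x ≤ logMap μ₁ x := Real.log_le_log (by positivity) (by gcongr)
  have hlog : Real.log (μ₁ + x) ≤ Real.log (μ₂ + x) := Real.log_le_log (by positivity) (by linarith)
  rw [abs_of_nonneg (sub_nonneg.2 hL), abs_sub_comm,
    abs_of_nonneg (sub_nonneg.2 (Real.log_le_log h₁ h)),
    logMap_eq_log_add_sub_log h₁ hx, logMap_eq_log_add_sub_log h₂ hx]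
  linarith

lemma iterate_logMap_nonneg (hμ : 0 < μ) (hx : 0 ≤ x) (n : ℕ) : 0 ≤ (logMap μ)^[n] x := by
  induction n with
  | zero => exact hx
  | succ n ih =>
    rw [Function.iterate_succ_apply']
    exact logMap_nonneg hμ ih

lemma iterate_logMap_le (hμ : 0 < μ) (hx : 0 ≤ x) (n : ℕ) : (logMap μ)^[n] x ≤ x / μ ^ n := by
  induction n with
  | zero => simp
  | succ n ih =>
    rw [Function.iterate_succ_apply', pow_succ, ← div_div]
    exact (logMap_le_div hμ (iterate_logMap_nonneg hμ hx n)).trans (by gcongr)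

lemma iterate_logMap_le_iterate_logMap (hμ : 0 < μ) (hx : 0 ≤ x) (hxy : x ≤ y) (n : ℕ) :
    (logMap μ)^[n] x ≤ (logMap μ)^[n] y := by
  induction n with
  | zero => exact hxy
  | succ n ih =>
    simp only [Function.iterate_succ_apply']
    exact logMap_le_logMap hμ (iterate_logMap_nonneg hμ hx n) ih

/-- Step `n` of the rescaled iteration loses at most the factor `exp (-x / μ ^ (n + 1))`, by
`div_mul_exp_neg_le_logMap`; these losses have a finite product. -/
lemma mul_exp_le_pow_mul_iterate_logMap (hμ : 1 < μ) (hx : 0 ≤ x) (n : ℕ) :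
    x * Real.exp (-(x / (μ - 1) * (1 - (μ ^ n)⁻¹))) ≤ μ ^ n * (logMap μ)^[n] x := by
  have hμ₀ : 0 < μ := zero_lt_one.trans hμ
  induction n with
  | zero => simp
  | succ n ih =>
    set y := (logMap μ)^[n] x
    have hy : 0 ≤ y := iterate_logMap_nonneg hμ₀ hx n
    have hyx : y / μ ≤ x / μ ^ (n + 1) := by
      rw [pow_succ, ← div_div]
      gcongr
      exact iterate_logMap_le hμ₀ hx n
    calc x * Real.exp (-(x / (μ - 1) * (1 - (μ ^ (n + 1))⁻¹)))
        = x * Real.exp (-(x / (μ - 1) * (1 - (μ ^ n)⁻¹))) * Real.exp (-(x / μ ^ (n + 1))) := by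
          rw [mul_assoc, ← Real.exp_add]
          congr 2
          field_simp [(sub_pos.2 hμ).ne']
          ring
      _ ≤ μ ^ n * y * Real.exp (-(y / μ)) := by gcongr
      _ = μ ^ (n + 1) * (y / μ * Real.exp (-(y / μ))) := by field_simp; ring
      _ ≤ μ ^ (n + 1) * logMap μ y := by gcongr; exact div_mul_exp_neg_le_logMap hμ₀ hy
      _ = μ ^ (n + 1) * (logMap μ)^[n + 1] x := by rw [Function.iterate_succ_apply']

lemma abs_iterate_logMap_sub_le {μ₁ μ₂ : ℝ} (h₁ : 1 < μ₁) (h₂ : 0 < μ₂) (hx : 0 ≤ x) (n : ℕ) :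
    |(logMap μ₁)^[n] x - (logMap μ₂)^[n] x| ≤ μ₁ / (μ₁ - 1) * |Real.log μ₁ - Real.log μ₂| := by
  have h₁₀ : 0 < μ₁ := zero_lt_one.trans h₁
  set d := |Real.log μ₁ - Real.log μ₂|
  have hD : μ₁ / (μ₁ - 1) * d / μ₁ + d = μ₁ / (μ₁ - 1) * d := by
    field_simp [(sub_pos.2 h₁).ne']
    ring
  induction n with
  | zero =>
    simp only [Function.iterate_zero_apply, sub_self, abs_zero]
    exact mul_nonneg (div_nonneg h₁₀.le (by linarith)) (abs_nonneg _)
  | succ n ih =>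
    simp only [Function.iterate_succ_apply']
    set u := (logMap μ₁)^[n] x
    set v := (logMap μ₂)^[n] x
    have hu := iterate_logMap_nonneg h₁₀ hx n
    have hv := iterate_logMap_nonneg h₂ hx n
    calc |logMap μ₁ u - logMap μ₂ v|
        ≤ |logMap μ₁ u - logMap μ₁ v| + |logMap μ₁ v - logMap μ₂ v| := abs_sub_le _ _ _
      _ ≤ |u - v| / μ₁ + d :=
          add_le_add (abs_logMap_sub_logMap_le h₁₀ hu hv)
            (abs_logMap_sub_logMap_le_abs_log_sub h₁₀ h₂ hv)
      _ ≤ μ₁ / (μ₁ - 1) * d / μ₁ + d := by gcongr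
      _ = μ₁ / (μ₁ - 1) * d := hD

lemma exists_iterate_logMap_mem_Icc (hμ : 1 < μ) {b : ℝ} (hb : 0 < b) (hx : b ≤ x) :
    ∃ n, (logMap μ)^[n] x ∈ Icc (logMap μ b) b := by
  have hμ₀ : 0 < μ := zero_lt_one.trans hμ
  have hex : ∃ n, (logMap μ)^[n] x < b := by
    obtain ⟨n, hn⟩ := pow_unbounded_of_one_lt (x / b) hμ
    refine ⟨n, (iterate_logMap_le hμ₀ (hb.le.trans hx) n).trans_lt ?_⟩
    rw [div_lt_iff₀ hb] at hn
    rw [div_lt_iff₀ (by positivity)]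
    linarith
  have hm : Nat.find hex ≠ 0 := fun h => (Nat.find_spec hex).not_ge (by rw [h]; exact hx)
  obtain ⟨n, hn⟩ := Nat.exists_eq_succ_of_ne_zero hm
  refine ⟨n + 1, ?_, (hn ▸ Nat.find_spec hex).le⟩
  rw [Function.iterate_succ_apply']
  exact logMap_le_logMap hμ₀ hb.le (not_lt.1 (Nat.find_min hex (by omega)))

lemma exists_iterate_logMap_pair_mem_Icc {μ₁ μ₂ : ℝ} (h₁ : 1 < μ₁) (h₂ : 1 < μ₂) :
    ∃ b > 0, ∃ q ≥ (1 : ℝ), ∀ x, b ≤ x →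
      ∃ n, (logMap μ₁)^[n] x ∈ Icc 1 q ∧ (logMap μ₂)^[n] x ∈ Icc 1 q := by
  have h₂₀ : 0 < μ₂ := zero_lt_one.trans h₂
  set D := μ₁ / (μ₁ - 1) * |Real.log μ₁ - Real.log μ₂|
  have hD : 0 ≤ D := mul_nonneg (div_nonneg (by linarith) (by linarith)) (abs_nonneg _)
  set b := μ₂ * Real.exp (D + 1)
  have hb : 1 ≤ b := one_le_mul_of_one_le_of_one_le h₂.le (Real.one_le_exp (by linarith))
  refine ⟨b, by linarith, b + D, by linarith, fun x hx => ?_⟩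
  obtain ⟨n, hn_lo, hn_hi⟩ := exists_iterate_logMap_mem_Icc h₂ (by linarith) hx
  have hlo : D + 1 ≤ (logMap μ₂)^[n] x := (le_logMap_mul_exp h₂₀ _).trans hn_lo
  have hdiff := abs_le.1 (abs_iterate_logMap_sub_le h₁ h₂₀ (x := x) (by linarith) n)
  exact ⟨n, ⟨by linarith, by linarith⟩, ⟨by linarith, by linarith⟩⟩

end logMap

def IsRescaledIterateLimit (μ : ℝ) (Φ : ℝ → ℝ) : Prop :=
  ∀ x, 0 ≤ x → Tendsto (fun n : ℕ => μ ^ n * (logMap μ)^[n] x) atTop (𝓝 (Φ x))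

namespace IsRescaledIterateLimit

variable {μ x y : ℝ} {Φ : ℝ → ℝ}

lemma nonneg (hΦ : IsRescaledIterateLimit μ Φ) (hμ : 0 < μ) (hx : 0 ≤ x) : 0 ≤ Φ x :=
  ge_of_tendsto' (hΦ x hx) fun n => mul_nonneg (by positivity) (iterate_logMap_nonneg hμ hx n)

lemma mono (hΦ : IsRescaledIterateLimit μ Φ) (hμ : 0 < μ) (hx : 0 ≤ x) (hxy : x ≤ y) :
    Φ x ≤ Φ y :=
  le_of_tendsto_of_tendsto' (hΦ x hx) (hΦ y (hx.trans hxy)) fun n =>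
    mul_le_mul_of_nonneg_left (iterate_logMap_le_iterate_logMap hμ hx hxy n) (by positivity)

lemma pos (hΦ : IsRescaledIterateLimit μ Φ) (hμ : 1 < μ) (hx : 0 < x) : 0 < Φ x := by
  have hμ₁ : 0 < μ - 1 := sub_pos.2 hμ
  refine (by positivity : 0 < x * Real.exp (-(x / (μ - 1)))).trans_le
    (ge_of_tendsto' (hΦ x hx.le) fun n =>
      le_trans ?_ (mul_exp_le_pow_mul_iterate_logMap hμ hx.le n))
  gcongr
  exact mul_le_of_le_one_right (by positivity) (by simp only [sub_le_self_iff]; positivity)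

lemma eq_pow_mul_apply_iterate (hΦ : IsRescaledIterateLimit μ Φ) (hμ : 0 < μ) (hx : 0 ≤ x)
    (m : ℕ) : Φ x = μ ^ m * Φ ((logMap μ)^[m] x) := by
  refine tendsto_nhds_unique ((hΦ x hx).comp (tendsto_add_atTop_nat m)) ?_
  convert (hΦ _ (iterate_logMap_nonneg hμ hx m)).const_mul (μ ^ m) using 1
  funext n
  simp only [Function.comp_apply, Function.iterate_add_apply, pow_add]
  ring

lemma rpow_eq_pow_mul_rpow_apply_iterate (hΦ : IsRescaledIterateLimit μ Φ) (hμ : 0 < μ)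
    (hx : 0 ≤ x) (m : ℕ) (γ : ℝ) : Φ x ^ γ = (μ ^ γ) ^ m * Φ ((logMap μ)^[m] x) ^ γ := by
  rw [hΦ.eq_pow_mul_apply_iterate hμ hx m,
    Real.mul_rpow (by positivity) (hΦ.nonneg hμ (iterate_logMap_nonneg hμ hx m)),
    Real.rpow_pow_comm hμ.le]

lemma rpow_mem_Icc (hΦ : IsRescaledIterateLimit μ Φ) (hμ : 0 < μ) {p q u γ : ℝ} (hp : 0 ≤ p)
    (hu : u ∈ Icc p q) (hγ : 0 ≤ γ) : Φ u ^ γ ∈ Icc (Φ p ^ γ) (Φ q ^ γ) :=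
  ⟨Real.rpow_le_rpow (hΦ.nonneg hμ hp) (hΦ.mono hμ hp hu.1) hγ,
    Real.rpow_le_rpow (hΦ.nonneg hμ (hp.trans hu.1)) (hΦ.mono hμ (hp.trans hu.1) hu.2) hγ⟩

end IsRescaledIterateLimit

lemma div_mem_Icc_div_of_mem_Icc {a b c d x y : ℝ} (ha : 0 ≤ a) (hc : 0 < c) (hx : x ∈ Icc a b)
    (hy : y ∈ Icc c d) : x / y ∈ Icc (a / d) (b / c) :=
  ⟨div_le_div₀ (ha.trans hx.1) hx.1 (hc.trans_le hy.1) hy.2,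
    div_le_div₀ (ha.trans (hx.1.trans hx.2)) hx.2 hc hy.1⟩

/-- Theorem 5.1: if `μ₁^{γ₁} = μ₂^{γ₂}` then the gauge functions
`h̃_{μᵢ,γᵢ}(t) = t² Φ̃_{μᵢ}(1/t)^{γᵢ}` are comparable near `0`, where
`Φ̃_μ(x) = lim_n μ^n L_μ^n(x)` and `L_μ(x) = log(1 + x/μ)`. -/
theorem stmt_5 (mu1 mu2 : ℝ) (hmu1 : mu1 ∈ Set.Ioi 1) (hmu2 : mu2 ∈ Set.Ioi 1)
    (gamma1 gamma2 : ℝ) (hg1 : 0 < gamma1) (hg2 : 0 < gamma2)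
    (hpow : mu1 ^ gamma1 = mu2 ^ gamma2)
    (Phi1 Phi2 : ℝ → ℝ)
    (hPhi1 : ∀ x : ℝ, 0 ≤ x →
      Tendsto (fun n : ℕ => mu1 ^ n * ((fun y => Real.log (1 + y / mu1))^[n] x))
        atTop (nhds (Phi1 x)))
    (hPhi2 : ∀ x : ℝ, 0 ≤ x →
      Tendsto (fun n : ℕ => mu2 ^ n * ((fun y => Real.log (1 + y / mu2))^[n] x))
        atTop (nhds (Phi2 x))) :
    ∃ c > (0:ℝ), ∃ C > (0:ℝ), ∃ t0 > (0:ℝ), ∀ t : ℝ, 0 < t → t < t0 →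
      c < (t ^ 2 * Phi1 (1 / t) ^ gamma1) / (t ^ 2 * Phi2 (1 / t) ^ gamma2) ∧
      (t ^ 2 * Phi1 (1 / t) ^ gamma1) / (t ^ 2 * Phi2 (1 / t) ^ gamma2) < C := by
  have hm1 : (1 : ℝ) < mu1 := hmu1
  have hm2 : (1 : ℝ) < mu2 := hmu2
  have hΦ1 : IsRescaledIterateLimit mu1 Phi1 := hPhi1
  have hΦ2 : IsRescaledIterateLimit mu2 Phi2 := hPhi2
  obtain ⟨b, hb, q, hq, hland⟩ := exists_iterate_logMap_pair_mem_Icc hm1 hm2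
  have hF1 : 0 < Phi1 1 ^ gamma1 := Real.rpow_pos_of_pos (hΦ1.pos hm1 one_pos) _
  have hF2 : 0 < Phi2 1 ^ gamma2 := Real.rpow_pos_of_pos (hΦ2.pos hm2 one_pos) _
  have hlo : 0 < Phi1 1 ^ gamma1 / Phi2 q ^ gamma2 :=
    div_pos hF1 (Real.rpow_pos_of_pos (hΦ2.pos hm2 (by linarith)) _)
  have hhi : 0 < Phi1 q ^ gamma1 / Phi2 1 ^ gamma2 :=
    div_pos (Real.rpow_pos_of_pos (hΦ1.pos hm1 (by linarith)) _) hF2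
  refine ⟨_, half_pos hlo, _, mul_pos two_pos hhi, 1 / b, by positivity, fun t ht htb => ?_⟩
  have hx : b ≤ 1 / t := by
    rw [le_div_iff₀ ht]
    rw [lt_div_iff₀ hb] at htb
    linarith
  obtain ⟨n, hu1, hu2⟩ := hland (1 / t) hx
  have hratio : t ^ 2 * Phi1 (1 / t) ^ gamma1 / (t ^ 2 * Phi2 (1 / t) ^ gamma2) =
      Phi1 ((logMap mu1)^[n] (1 / t)) ^ gamma1 / Phi2 ((logMap mu2)^[n] (1 / t)) ^ gamma2 := by
    rw [mul_div_mul_left _ _ (by positivity),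
      hΦ1.rpow_eq_pow_mul_rpow_apply_iterate (by linarith) (by positivity) n,
      hΦ2.rpow_eq_pow_mul_rpow_apply_iterate (by linarith) (by positivity) n, hpow,
      mul_div_mul_left _ _ (by positivity)]
  have hbounds := div_mem_Icc_div_of_mem_Icc hF1.le hF2
    (hΦ1.rpow_mem_Icc (by linarith) zero_le_one hu1 hg1.le)
    (hΦ2.rpow_mem_Icc (by linarith) zero_le_one hu2 hg2.le)
  rw [hratio]
  constructor <;> linarith [hbounds.1, hbounds.2]
end

section
/- Let λ1, λ2 ∈ (0, 1/e) and γ1, γ2 > 0 with β_{λ1}^{γ1} = β_{λ2}^{γ2}. Then there exist constants c, C > 0 and t0 > 0 such that c < h_{λ1,γ1}(t)/h_{λ2,γ2}(t) < C for all 0 < t < t0. -/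
/-!
Write `L = logDiv λ`. On `[β, ∞)` we have `L y - β = log (y / β)`, so `L` contracts towards `β`
with factor `1 / β`, and `Φ x = β ^ n * Φ (L^[n] x)`. Fix `x₀ > β` and let `n` be the first time
the `L`-orbit of `x` enters `[β, x₀]`; then `L^[n] x ∈ [L x₀, x₀]`, where `Φ` is bounded between
positive constants, so `Φ x ≍ β ^ n`. Positivity comes from a second-order estimate of `log`:
step `m` of the Koenigs sequence of `y` loses at most `(y - β) ^ 2 / β ^ (m + 1)`, whence
`Φ y ≥ (y - β) * (1 - (y - β) / (β - 1))`.

For two parameters the maps `L_{λ₁}`, `L_{λ₂}` differ by a constant and contract, so the two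
orbits of `x` stay a bounded distance apart, and at the entry time `n` of the first orbit also
`Φ₂ x ≲ β₂ ^ n`. Hence `Φ₁ x ^ γ₁ / Φ₂ x ^ γ₂ ≳ (β₁ ^ γ₁ / β₂ ^ γ₂) ^ n = 1`; the upper bound
follows by exchanging the two parameters.
-/

open Filter Set Topology

namespace ExpMap

noncomputable def logDiv (lam y : ℝ) : ℝ := Real.log (y / lam)

def IsKoenigsLinearizer (lam β : ℝ) (Φ : ℝ → ℝ) : Prop :=
  ∀ x, β ≤ x → Tendsto (fun n : ℕ => β ^ n * ((logDiv lam)^[n] x - β)) atTop (𝓝 (Φ x))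

variable {lam β : ℝ}

lemma pos_of_mul_exp_eq (hβ : 0 < β) (hfix : lam * Real.exp β = β) : 0 < lam :=
  pos_of_mul_pos_left (by rwa [hfix]) (Real.exp_pos β).le

lemma logDiv_mono (hlam : 0 < lam) {a b : ℝ} (ha : 0 < a) (hab : a ≤ b) :
    logDiv lam a ≤ logDiv lam b :=
  Real.log_le_log (div_pos ha hlam) (div_le_div_of_nonneg_right hab hlam.le)

lemma logDiv_sub_eq_log_div (hβ : 0 < β) (hfix : lam * Real.exp β = β) {y : ℝ} (hy : 0 < y) :
    logDiv lam y - β = Real.log (y / β) := by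
  have hlam := pos_of_mul_exp_eq hβ hfix
  conv_rhs => rw [← hfix]
  rw [div_mul_eq_div_div, Real.log_div (div_pos hy hlam).ne' (Real.exp_pos β).ne', Real.log_exp,
    logDiv]

lemma lt_logDiv (hβ : 0 < β) (hfix : lam * Real.exp β = β) {y : ℝ} (hy : β < y) :
    β < logDiv lam y := by
  have := logDiv_sub_eq_log_div hβ hfix (hβ.trans hy)
  have := Real.log_pos ((one_lt_div hβ).2 hy)
  linarith

lemma le_logDiv (hβ : 0 < β) (hfix : lam * Real.exp β = β) {y : ℝ} (hy : β ≤ y) :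
    β ≤ logDiv lam y := by
  have := logDiv_sub_eq_log_div hβ hfix (hβ.trans_le hy)
  have := Real.log_nonneg ((one_le_div hβ).2 hy)
  linarith

lemma logDiv_sub_le (hβ : 0 < β) (hfix : lam * Real.exp β = β) {y : ℝ} (hy : 0 < y) :
    logDiv lam y - β ≤ (y - β) / β := by
  rw [logDiv_sub_eq_log_div hβ hfix hy]
  exact (Real.log_le_sub_one_of_pos (div_pos hy hβ)).trans_eq (by field_simp)

lemma sub_sub_sq_div_le (hβ : 0 < β) (hfix : lam * Real.exp β = β) {y : ℝ} (hy : β ≤ y) :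
    (y - β) - (y - β) ^ 2 / β ≤ β * (logDiv lam y - β) := by
  have hy0 : 0 < y := hβ.trans_le hy
  have hlog := Real.one_sub_inv_le_log_of_pos (div_pos hy0 hβ)
  rw [inv_div, ← logDiv_sub_eq_log_div hβ hfix hy0] at hlog
  refine le_trans ?_ (mul_le_mul_of_nonneg_left hlog hβ.le)
  have hgap : β * (1 - β / y) - ((y - β) - (y - β) ^ 2 / β) = (y - β) ^ 3 / (β * y) := by
    field_simp
    ring
  have : 0 ≤ (y - β) ^ 3 / (β * y) := by
    have : 0 ≤ y - β := sub_nonneg.2 hy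
    positivity
  linarith

lemma le_iterate_logDiv (hβ : 0 < β) (hfix : lam * Real.exp β = β) {x : ℝ} (hx : β ≤ x)
    (n : ℕ) : β ≤ (logDiv lam)^[n] x := by
  induction n with
  | zero => exact hx
  | succ n ih => rw [Function.iterate_succ_apply']; exact le_logDiv hβ hfix ih

lemma iterate_logDiv_sub_le (hβ : 0 < β) (hfix : lam * Real.exp β = β) {x : ℝ} (hx : β ≤ x)
    (n : ℕ) : (logDiv lam)^[n] x - β ≤ (x - β) / β ^ n := by
  induction n with
  | zero => simp
  | succ n ih =>
    rw [Function.iterate_succ_apply', pow_succ, ← div_div]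
    exact (logDiv_sub_le hβ hfix (hβ.trans_le (le_iterate_logDiv hβ hfix hx n))).trans
      (div_le_div_of_nonneg_right ih hβ.le)

lemma iterate_logDiv_mono (hβ : 0 < β) (hfix : lam * Real.exp β = β) {x y : ℝ} (hx : β ≤ x)
    (hxy : x ≤ y) (n : ℕ) : (logDiv lam)^[n] x ≤ (logDiv lam)^[n] y := by
  induction n with
  | zero => exact hxy
  | succ n ih =>
    simp only [Function.iterate_succ_apply']
    exact logDiv_mono (pos_of_mul_exp_eq hβ hfix)
      (hβ.trans_le (le_iterate_logDiv hβ hfix hx n)) ih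

lemma exists_iterate_logDiv_le (hβ : 1 < β) (hfix : lam * Real.exp β = β) {x₀ x : ℝ}
    (hx₀ : β < x₀) (hx : β ≤ x) : ∃ n, (logDiv lam)^[n] x ≤ x₀ := by
  have hβ0 : 0 < β := one_pos.trans hβ
  obtain ⟨n, hn⟩ := pow_unbounded_of_one_lt ((x - β) / (x₀ - β)) hβ
  refine ⟨n, ?_⟩
  have := iterate_logDiv_sub_le hβ0 hfix hx n
  rw [div_lt_iff₀ (sub_pos.2 hx₀)] at hn
  have : (x - β) / β ^ n < x₀ - β := by
    rw [div_lt_iff₀ (pow_pos hβ0 n)]; linarith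
  linarith

lemma pow_mul_iterate_logDiv_sub_sub_le (hβ : 0 < β) (hfix : lam * Real.exp β = β) {x : ℝ}
    (hx : β ≤ x) (m : ℕ) :
    β ^ m * ((logDiv lam)^[m] x - β) - (x - β) ^ 2 / β ^ (m + 1) ≤
      β ^ (m + 1) * ((logDiv lam)^[m + 1] x - β) := by
  have hβm := pow_pos hβ m
  have hy := le_iterate_logDiv hβ hfix hx m
  set u := (logDiv lam)^[m] x - β
  have hu : β ^ m * u ≤ x - β := by
    rw [← le_div_iff₀' hβm]
    exact iterate_logDiv_sub_le hβ hfix hx m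
  have hsq : β ^ m * u ^ 2 ≤ (x - β) ^ 2 / β ^ m := by
    rw [le_div_iff₀ hβm]
    have : 0 ≤ β ^ m * u := mul_nonneg hβm.le (sub_nonneg.2 hy)
    nlinarith
  have hlog := mul_le_mul_of_nonneg_left (sub_sub_sq_div_le hβ hfix hy) hβm.le
  calc β ^ m * u - (x - β) ^ 2 / β ^ (m + 1) ≤ β ^ m * u - β ^ m * u ^ 2 / β := by
        rw [pow_succ β, ← div_div]; gcongr
    _ = β ^ m * (u - u ^ 2 / β) := by ring
    _ ≤ β ^ (m + 1) * ((logDiv lam)^[m + 1] x - β) := by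
        rw [Function.iterate_succ_apply', pow_succ β m, mul_assoc]; exact hlog

lemma le_pow_mul_iterate_logDiv_sub (hβ : 1 < β) (hfix : lam * Real.exp β = β) {x : ℝ}
    (hx : β ≤ x) (m : ℕ) :
    (x - β) - (x - β) ^ 2 / (β - 1) + (x - β) ^ 2 / ((β - 1) * β ^ m) ≤
      β ^ m * ((logDiv lam)^[m] x - β) := by
  induction m with
  | zero => simp
  | succ m ih =>
    -- the last term is the sum of the losses `(x - β) ^ 2 / β ^ (k + 1)` of all steps `k ≥ m`
    have hsplit : (x - β) ^ 2 / ((β - 1) * β ^ m) - (x - β) ^ 2 / β ^ (m + 1) =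
        (x - β) ^ 2 / ((β - 1) * β ^ (m + 1)) := by
      have : β - 1 ≠ 0 := by linarith
      field_simp
      ring
    linarith [pow_mul_iterate_logDiv_sub_sub_le (one_pos.trans hβ) hfix hx m]

namespace IsKoenigsLinearizer

variable {Φ : ℝ → ℝ}

lemma eq_pow_mul_iterate (hβ : 0 < β) (hfix : lam * Real.exp β = β)
    (hΦ : IsKoenigsLinearizer lam β Φ) {x : ℝ} (hx : β ≤ x) (n : ℕ) :
    Φ x = β ^ n * Φ ((logDiv lam)^[n] x) := by
  have hshift := (hΦ x hx).comp (tendsto_add_atTop_nat n)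
  have hlim := (hΦ _ (le_iterate_logDiv hβ hfix hx n)).const_mul (β ^ n)
  refine tendsto_nhds_unique hshift (hlim.congr fun m => ?_)
  simp only [Function.comp_apply, pow_add, ← Function.iterate_add_apply]
  ring

lemma le_sub (hβ : 0 < β) (hfix : lam * Real.exp β = β) (hΦ : IsKoenigsLinearizer lam β Φ)
    {x : ℝ} (hx : β ≤ x) : Φ x ≤ x - β := by
  refine le_of_tendsto' (hΦ x hx) fun n => ?_
  have := mul_le_mul_of_nonneg_left (iterate_logDiv_sub_le hβ hfix hx n) (pow_pos hβ n).le
  rwa [mul_div_cancel₀ _ (pow_pos hβ n).ne'] at this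

lemma monotoneOn (hβ : 0 < β) (hfix : lam * Real.exp β = β) (hΦ : IsKoenigsLinearizer lam β Φ) :
    MonotoneOn Φ (Ici β) := fun x hx y hy hxy =>
  le_of_tendsto_of_tendsto' (hΦ x hx) (hΦ y hy) fun n => by
    gcongr
    exact iterate_logDiv_mono hβ hfix hx hxy n

lemma sub_mul_le (hβ : 1 < β) (hfix : lam * Real.exp β = β) (hΦ : IsKoenigsLinearizer lam β Φ)
    {x : ℝ} (hx : β ≤ x) : (x - β) * (1 - (x - β) / (β - 1)) ≤ Φ x := by
  refine ge_of_tendsto' (hΦ x hx) fun m =>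
    le_trans ?_ (le_pow_mul_iterate_logDiv_sub hβ hfix hx m)
  have : 0 ≤ (x - β) ^ 2 / ((β - 1) * β ^ m) := by
    have : 0 < β - 1 := by linarith
    positivity
  calc (x - β) * (1 - (x - β) / (β - 1)) = (x - β) - (x - β) ^ 2 / (β - 1) := by ring
    _ ≤ _ := by linarith

lemma pos (hβ : 1 < β) (hfix : lam * Real.exp β = β) (hΦ : IsKoenigsLinearizer lam β Φ)
    {x : ℝ} (hx : β < x) : 0 < Φ x := by
  have hβ0 : 0 < β := one_pos.trans hβ
  set y := min x (β + (β - 1) / 2)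
  have hy : β < y := lt_min hx (by linarith)
  have hyx : y ≤ x := min_le_left _ _
  have hsmall : (y - β) / (β - 1) ≤ 1 / 2 := by
    rw [div_le_iff₀ (by linarith)]
    linarith [min_le_right x (β + (β - 1) / 2)]
  calc 0 < (y - β) * (1 - (y - β) / (β - 1)) := mul_pos (by linarith) (by linarith)
    _ ≤ Φ y := hΦ.sub_mul_le hβ hfix hy.le
    _ ≤ Φ x := hΦ.monotoneOn hβ0 hfix hy.le (hy.le.trans hyx) hyx

lemma exists_pow_mul_le (hβ : 1 < β) (hfix : lam * Real.exp β = β)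
    (hΦ : IsKoenigsLinearizer lam β Φ) {x₀ x : ℝ} (hx₀ : β < x₀) (hx : x₀ < x) :
    ∃ n, (logDiv lam)^[n] x ≤ x₀ ∧ β ^ n * Φ (logDiv lam x₀) ≤ Φ x := by
  classical
  have hβ0 : 0 < β := one_pos.trans hβ
  have hβx : β ≤ x := (hx₀.trans hx).le
  have hex := exists_iterate_logDiv_le hβ hfix hx₀ hβx
  refine ⟨Nat.find hex, Nat.find_spec hex, ?_⟩
  obtain ⟨k, hk⟩ := Nat.exists_eq_succ_of_ne_zero
    (Nat.pos_iff_ne_zero.1 ((Nat.find_pos hex).2 (not_le.2 hx)))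
  have hbefore : x₀ < (logDiv lam)^[k] x := not_le.1 (Nat.find_min hex (by omega))
  have hafter : logDiv lam x₀ ≤ (logDiv lam)^[Nat.find hex] x := by
    rw [hk, Function.iterate_succ_apply']
    exact logDiv_mono (pos_of_mul_exp_eq hβ0 hfix) (hβ0.trans hx₀) hbefore.le
  rw [hΦ.eq_pow_mul_iterate hβ0 hfix hβx]
  have hβx₀ := le_logDiv hβ0 hfix hx₀.le
  gcongr
  exact hΦ.monotoneOn hβ0 hfix hβx₀ (hβx₀.trans hafter) hafter

end IsKoenigsLinearizer

variable {lam₁ lam₂ β₁ β₂ : ℝ}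

lemma exists_iterate_logDiv_le_add (hβ₁ : 1 < β₁) (hβ₂ : 0 < β₂)
    (hfix₁ : lam₁ * Real.exp β₁ = β₁) (hfix₂ : lam₂ * Real.exp β₂ = β₂) :
    ∃ D ≥ 0, ∀ x, β₁ ≤ x → β₂ ≤ x → ∀ n,
      (logDiv lam₂)^[n] x ≤ (logDiv lam₁)^[n] x + D := by
  have hβ₁0 : 0 < β₁ := one_pos.trans hβ₁
  have hlam₁ := pos_of_mul_exp_eq hβ₁0 hfix₁
  have hlam₂ := pos_of_mul_exp_eq hβ₂ hfix₂
  set c := |Real.log lam₁ - Real.log lam₂|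
  -- `D` is the fixed point of the one-step error recursion `D ↦ D / β₁ + c`.
  set D := c * β₁ / (β₁ - 1)
  have hD : D / β₁ + (Real.log lam₁ - Real.log lam₂) ≤ D := by
    have : D / β₁ + c = D := by
      have : β₁ - 1 ≠ 0 := by linarith
      simp only [D]
      field_simp
      ring
    linarith [le_abs_self (Real.log lam₁ - Real.log lam₂)]
  have hD0 : 0 ≤ D := div_nonneg (mul_nonneg (abs_nonneg _) hβ₁0.le) (by linarith)
  refine ⟨D, hD0, fun x hx₁ hx₂ n => ?_⟩
  induction n with
  | zero => simpa using hD0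
  | succ n ih =>
    set a := (logDiv lam₂)^[n] x
    set b := (logDiv lam₁)^[n] x
    have ha : 0 < a := hβ₂.trans_le (le_iterate_logDiv hβ₂ hfix₂ hx₂ n)
    have hb : β₁ ≤ b := le_iterate_logDiv hβ₁0 hfix₁ hx₁ n
    have hb0 : 0 < b := hβ₁0.trans_le hb
    have hlog : Real.log (b + D) - Real.log b ≤ D / β₁ := by
      rw [← Real.log_div (by positivity) hb0.ne']
      calc Real.log ((b + D) / b) ≤ (b + D) / b - 1 := Real.log_le_sub_one_of_pos (by positivity)
        _ = D / b := by field_simp; ring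
        _ ≤ D / β₁ := div_le_div_of_nonneg_left hD0 hβ₁0 hb
    have hab := Real.log_le_log ha ih
    simp only [Function.iterate_succ_apply', logDiv]
    rw [Real.log_div ha.ne' hlam₂.ne', Real.log_div hb0.ne' hlam₁.ne']
    linarith

variable {Φ₁ Φ₂ : ℝ → ℝ}

lemma exists_pow_mul_le_and_le_pow_mul (hβ₁ : 1 < β₁) (hβ₂ : 0 < β₂)
    (hfix₁ : lam₁ * Real.exp β₁ = β₁) (hfix₂ : lam₂ * Real.exp β₂ = β₂)
    (hΦ₁ : IsKoenigsLinearizer lam₁ β₁ Φ₁) (hΦ₂ : IsKoenigsLinearizer lam₂ β₂ Φ₂) :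
    ∃ c > 0, ∃ C > 0, ∀ᶠ x in atTop, ∃ n : ℕ, β₁ ^ n * c ≤ Φ₁ x ∧ Φ₂ x ≤ β₂ ^ n * C := by
  have hβ₁0 : 0 < β₁ := one_pos.trans hβ₁
  obtain ⟨D, hD, horbit⟩ := exists_iterate_logDiv_le_add hβ₁ hβ₂ hfix₁ hfix₂
  set x₀ := max β₁ β₂ + 1
  have hx₀₁ : β₁ < x₀ := by linarith [le_max_left β₁ β₂]
  have hx₀₂ : β₂ < x₀ := by linarith [le_max_right β₁ β₂]
  refine ⟨Φ₁ (logDiv lam₁ x₀), hΦ₁.pos hβ₁ hfix₁ (lt_logDiv hβ₁0 hfix₁ hx₀₁),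
    x₀ + D - β₂, by linarith, ?_⟩
  filter_upwards [eventually_gt_atTop x₀] with x hx
  obtain ⟨n, hn, hlow⟩ := hΦ₁.exists_pow_mul_le hβ₁ hfix₁ hx₀₁ hx
  refine ⟨n, hlow, ?_⟩
  have hx₂ : β₂ ≤ x := (hx₀₂.trans hx).le
  calc Φ₂ x = β₂ ^ n * Φ₂ ((logDiv lam₂)^[n] x) := hΦ₂.eq_pow_mul_iterate hβ₂ hfix₂ hx₂ n
    _ ≤ β₂ ^ n * ((logDiv lam₂)^[n] x - β₂) := by
      gcongr
      exact hΦ₂.le_sub hβ₂ hfix₂ (le_iterate_logDiv hβ₂ hfix₂ hx₂ n)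
    _ ≤ β₂ ^ n * (x₀ + D - β₂) := by
      gcongr
      linarith [horbit x (hx₀₁.trans hx).le hx₂ n]

lemma pow_mul_rpow {b : ℝ} (hb : 0 ≤ b) {a : ℝ} (ha : 0 ≤ a) (n : ℕ) (γ : ℝ) :
    (b ^ n * a) ^ γ = (b ^ γ) ^ n * a ^ γ := by
  rw [Real.mul_rpow (pow_nonneg hb n) ha, Real.rpow_pow_comm hb]

lemma exists_le_rpow_div_rpow (hβ₁ : 1 < β₁) (hβ₂ : 1 < β₂)
    (hfix₁ : lam₁ * Real.exp β₁ = β₁) (hfix₂ : lam₂ * Real.exp β₂ = β₂)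
    {γ₁ γ₂ : ℝ} (hγ₁ : 0 ≤ γ₁) (hγ₂ : 0 ≤ γ₂) (hpow : β₁ ^ γ₁ = β₂ ^ γ₂)
    (hΦ₁ : IsKoenigsLinearizer lam₁ β₁ Φ₁) (hΦ₂ : IsKoenigsLinearizer lam₂ β₂ Φ₂) :
    ∃ c > 0, ∀ᶠ x in atTop, c ≤ Φ₁ x ^ γ₁ / Φ₂ x ^ γ₂ := by
  have hβ₁0 : 0 < β₁ := one_pos.trans hβ₁
  have hβ₂0 : 0 < β₂ := one_pos.trans hβ₂
  obtain ⟨c, hc, C, hC, hev⟩ :=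
    exists_pow_mul_le_and_le_pow_mul hβ₁ hβ₂0 hfix₁ hfix₂ hΦ₁ hΦ₂
  refine ⟨c ^ γ₁ / C ^ γ₂, by positivity, ?_⟩
  filter_upwards [hev, eventually_gt_atTop β₂] with x ⟨n, hlow, hupp⟩ hx
  have hΦ₂x := hΦ₂.pos hβ₂ hfix₂ hx
  calc c ^ γ₁ / C ^ γ₂ = (β₁ ^ n * c) ^ γ₁ / (β₂ ^ n * C) ^ γ₂ := by
        rw [pow_mul_rpow hβ₁0.le hc.le, pow_mul_rpow hβ₂0.le hC.le, hpow,
          mul_div_mul_left _ _ (pow_pos (Real.rpow_pos_of_pos hβ₂0 γ₂) n).ne']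
    _ ≤ Φ₁ x ^ γ₁ / Φ₂ x ^ γ₂ :=
      div_le_div₀ (Real.rpow_nonneg ((by positivity : (0:ℝ) ≤ β₁ ^ n * c).trans hlow) γ₁)
        (Real.rpow_le_rpow (by positivity) hlow hγ₁)
        (Real.rpow_pos_of_pos hΦ₂x γ₂) (Real.rpow_le_rpow hΦ₂x.le hupp hγ₂)

end ExpMap

open ExpMap

theorem stmt_6_general (lam1 lam2 : ℝ)
    (beta1 beta2 : ℝ) (hbeta1 : 1 < beta1) (hbeta2 : 1 < beta2)
    (hfix1 : lam1 * Real.exp beta1 = beta1) (hfix2 : lam2 * Real.exp beta2 = beta2)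
    (gamma1 gamma2 : ℝ) (hg1 : 0 < gamma1) (hg2 : 0 < gamma2)
    (hpow : beta1 ^ gamma1 = beta2 ^ gamma2)
    (Phi1 Phi2 : ℝ → ℝ)
    (hPhi1 : ∀ x : ℝ, beta1 ≤ x →
      Tendsto (fun n : ℕ => beta1 ^ n * ((fun y => Real.log (y / lam1))^[n] x - beta1))
        atTop (nhds (Phi1 x)))
    (hPhi2 : ∀ x : ℝ, beta2 ≤ x →
      Tendsto (fun n : ℕ => beta2 ^ n * ((fun y => Real.log (y / lam2))^[n] x - beta2))
        atTop (nhds (Phi2 x))) :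
    ∃ c > (0:ℝ), ∃ C > (0:ℝ), ∃ t0 > (0:ℝ), ∀ t : ℝ, 0 < t → t < t0 →
      c < (t ^ 2 * Phi1 (1 / t) ^ gamma1) / (t ^ 2 * Phi2 (1 / t) ^ gamma2) ∧
      (t ^ 2 * Phi1 (1 / t) ^ gamma1) / (t ^ 2 * Phi2 (1 / t) ^ gamma2) < C := by
  obtain ⟨c, hc, hlow⟩ := exists_le_rpow_div_rpow hbeta1 hbeta2 hfix1 hfix2 hg1.le hg2.le hpow
    hPhi1 hPhi2
  obtain ⟨c', hc', hupp⟩ := exists_le_rpow_div_rpow hbeta2 hbeta1 hfix2 hfix1 hg2.le hg1.le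
    hpow.symm hPhi2 hPhi1
  obtain ⟨X, hX⟩ := eventually_atTop.1 (hlow.and hupp)
  refine ⟨c / 2, by positivity, 2 / c', by positivity, 1 / max X 1, by positivity,
    fun t ht htX => ?_⟩
  have hXt : X ≤ 1 / t :=
    (le_max_left X 1).trans ((lt_one_div ht (lt_max_of_lt_right one_pos)).1 htX).le
  obtain ⟨hlow_t, hupp_t⟩ := hX (1 / t) hXt
  rw [mul_div_mul_left _ _ (by positivity : t ^ 2 ≠ 0)]
  constructor
  · linarith
  · calc _ = (Phi2 (1 / t) ^ gamma2 / Phi1 (1 / t) ^ gamma1)⁻¹ := (inv_div _ _).symm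
      _ ≤ c'⁻¹ := inv_anti₀ hc' hupp_t
      _ < 2 / c' := by rw [inv_eq_one_div]; gcongr; norm_num

/-- Corollary 5.2: if `λ₁, λ₂ ∈ (0,1/e)` and `β_{λ₁}^{γ₁} = β_{λ₂}^{γ₂}`,
then the gauge functions `h_{λᵢ,γᵢ}(t) = t² Φ_{λᵢ}(1/t)^{γᵢ}` are comparable near `0`. -/
theorem stmt_6 (lam1 lam2 : ℝ)
    (hlam1 : lam1 ∈ Set.Ioo 0 (1 / Real.exp 1)) (hlam2 : lam2 ∈ Set.Ioo 0 (1 / Real.exp 1))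
    (beta1 beta2 : ℝ) (hbeta1 : 1 < beta1) (hbeta2 : 1 < beta2)
    (hfix1 : lam1 * Real.exp beta1 = beta1) (hfix2 : lam2 * Real.exp beta2 = beta2)
    (gamma1 gamma2 : ℝ) (hg1 : 0 < gamma1) (hg2 : 0 < gamma2)
    (hpow : beta1 ^ gamma1 = beta2 ^ gamma2)
    (Phi1 Phi2 : ℝ → ℝ)
    (hPhi1 : ∀ x : ℝ, beta1 ≤ x →
      Tendsto (fun n : ℕ => beta1 ^ n * ((fun y => Real.log (y / lam1))^[n] x - beta1))
        atTop (nhds (Phi1 x)))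
    (hPhi2 : ∀ x : ℝ, beta2 ≤ x →
      Tendsto (fun n : ℕ => beta2 ^ n * ((fun y => Real.log (y / lam2))^[n] x - beta2))
        atTop (nhds (Phi2 x))) :
    ∃ c > (0:ℝ), ∃ C > (0:ℝ), ∃ t0 > (0:ℝ), ∀ t : ℝ, 0 < t → t < t0 →
      c < (t ^ 2 * Phi1 (1 / t) ^ gamma1) / (t ^ 2 * Phi2 (1 / t) ^ gamma2) ∧
      (t ^ 2 * Phi1 (1 / t) ^ gamma1) / (t ^ 2 * Phi2 (1 / t) ^ gamma2) < C :=
  stmt_6_general lam1 lam2 beta1 beta2 hbeta1 hbeta2 hfix1 hfix2 gamma1 gamma2 hg1 hg2 hpow Phi1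
    Phi2 hPhi1 hPhi2
end

section
/- For each k ∈ ℕ let 𝒜_k be a finite collection of pairwise disjoint, compact, connected subsets of ℂ of positive Lebesgue measure, and let A_k be the union of the elements of 𝒜_k. Assume: (i) every F ∈ 𝒜_{k+1} is contained in some F' ∈ 𝒜_k; (ii) there is a decreasing sequence (d_k) converging to 0 with diam F ≤ d_k for every F ∈ 𝒜_k; (iii) there are Δ_k > 0 with dens(A_{k+1}, F) ≥ Δ_k for every F ∈ 𝒜_k. Let ε > 0 and g : (0, ε) → [0, ∞) be decreasing and continuous such that t ↦ t²g(t) is increasing, t²g(t) → 0 as t → 0, and g(d_k)·∏_{j=1}^k Δ_j → ∞ as k → ∞. Define h(t) = t²g(t) for t ∈ (0, ε) and h(0) = 0. Then h is a continuous gauge function and H^h(⋂_{k∈ℕ} A_k) = ∞. -/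
open MeasureTheory Filter Set Metric
open scoped ENNReal

noncomputable section

/-- Hausdorff measure with respect to a (real) gauge function. -/
def gaugeMeasure (h : ℝ → ℝ) : Measure ℂ :=
  Measure.mkMetric (fun r : ℝ≥0∞ => ENNReal.ofReal (h r.toReal))

/-- `h` is a gauge function on `[0, ε)`: monotonically increasing, nonnegative,
continuous from the right, with `h 0 = 0`. -/
def IsGaugeOn (h : ℝ → ℝ) (ε : ℝ) : Prop :=
  0 < ε ∧ h 0 = 0 ∧ (∀ t ∈ Set.Ico (0:ℝ) ε, 0 ≤ h t) ∧
    MonotoneOn h (Set.Ico 0 ε) ∧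
    ∀ t ∈ Set.Ico (0:ℝ) ε, ContinuousWithinAt h (Set.Ici t) t

/-- The density of `A` in `B` (planar Lebesgue measure). -/
def dens (A B : Set ℂ) : ℝ≥0∞ := volume (A ∩ B) / volume B

open Bornology
open scoped Classical Topology Real

/-!
The mass of a member `F₀` of `𝒜 0` is distributed down the tree `𝒜`: each set passes its mass
on to its children in proportion to their areas. By the density bounds, a member of `𝒜 k` then
carries mass at most `|F| / ∏_{j<k} Δ_j`. A set `V` of diameter `T ∈ (d_{k+1}, d_k]` meets only
members of `𝒜 (k+1)` lying in a disc of radius `2T`, so it catches mass at most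
`4πT² / ∏_{j≤k} Δ_j ≤ 4π h(T) / (g(d_k) ∏_{j≤k} Δ_j)`, using that `g` is decreasing. The
divergence of `g(d_k) ∏_{j≤k} Δ_j` makes this an arbitrarily small multiple of `h(T)`, while any
cover of the limit set catches the whole mass `|F₀|`; by compactness it suffices to consider finite
covers by open sets.
-/

theorem ContinuousWithinAt.exists_pos_forall_Icc_le_add {f : ℝ → ℝ} {a η : ℝ}
    (hf : ContinuousWithinAt f (Ici a) a) (hη : 0 < η) :
    ∃ ρ > 0, ∀ y ∈ Icc a (a + ρ), f y ≤ f a + η := by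
  obtain ⟨u, hau, hu⟩ := mem_nhdsGE_iff_exists_Icc_subset.1
    (hf.eventually (Iio_mem_nhds (lt_add_of_pos_right (f a) hη)))
  exact ⟨u - a, sub_pos.2 hau, fun y hy => (hu ⟨hy.1, by linarith [hy.2]⟩).le⟩

theorem exists_pos_gauge_diam_thickening_le {X : Type*} [PseudoMetricSpace X] {h : ℝ → ℝ}
    {δ η : ℝ} (hh : ∀ t ∈ Ico 0 δ, ContinuousWithinAt h (Ici t) t) {s : Set X}
    (hs : IsBounded s) (hsδ : diam s < δ) (hη : 0 < η) :
    ∃ ρ > 0, diam (thickening ρ s) ≤ δ ∧ h (diam (thickening ρ s)) ≤ h (diam s) + η := by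
  obtain ⟨ρ, hρ, hρh⟩ := (hh _ ⟨diam_nonneg, hsδ⟩).exists_pos_forall_Icc_le_add hη
  set ρ' := min (ρ / 2) ((δ - diam s) / 2)
  have hρ' : 0 < ρ' := lt_min (by positivity) (by linarith)
  have hupper : diam (thickening ρ' s) ≤ diam s + 2 * ρ' := diam_thickening_le _ hρ'.le
  have hlower : diam s ≤ diam (thickening ρ' s) :=
    diam_mono (self_subset_thickening hρ' _) hs.thickening
  refine ⟨ρ', hρ', ?_, hρh _ ⟨hlower, ?_⟩⟩
  · linarith [min_le_right (ρ / 2) ((δ - diam s) / 2)]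
  · linarith [min_le_left (ρ / 2) ((δ - diam s) / 2)]

/-- Each member of a countable cover is thickened to an open set at a summably small cost in `h`,
and compactness extracts a finite subcover. -/
theorem le_mkMetric_of_forall_finite_open_cover {X : Type*} [MetricSpace X] [MeasurableSpace X]
    [BorelSpace X] {h : ℝ → ℝ} {δ : ℝ} (hδ : 0 < δ)
    (hh : ∀ t ∈ Ico 0 δ, ContinuousWithinAt h (Ici t) t) {E : Set X} (hE : IsCompact E)
    {c : ℝ≥0∞}
    (hc : ∀ (I : Finset ℕ) (V : ℕ → Set X),
      (∀ n ∈ I, IsOpen (V n) ∧ (V n).Nonempty ∧ IsBounded (V n) ∧ diam (V n) ≤ δ) →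
      E ⊆ ⋃ n ∈ I, V n → c ≤ ∑ n ∈ I, ENNReal.ofReal (h (diam (V n)))) :
    c ≤ Measure.mkMetric (fun r => ENNReal.ofReal (h r.toReal)) E := by
  rw [Measure.mkMetric_apply]
  refine le_iSup₂_of_le (ENNReal.ofReal (δ / 2)) (by positivity)
    (le_iInf₂ fun t hEt => le_iInf fun ht => ENNReal.le_of_forall_pos_le_add fun η hη _ => ?_)
  obtain ⟨η', hη'pos, hη'sum⟩ :=
    ENNReal.exists_pos_sum_of_countable (ENNReal.coe_ne_zero.2 hη.ne') ℕ
  have hbdd : ∀ n, IsBounded (t n) :=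
    fun n => isBounded_iff_ediam_ne_top.2 (ne_top_of_le_ne_top ENNReal.ofReal_ne_top (ht n))
  have hdiam_t : ∀ n, diam (t n) < δ := fun n =>
    (ENNReal.toReal_le_of_le_ofReal (by positivity) (ht n)).trans_lt (by linarith)
  choose ρ hρpos hρδ hρh using fun n =>
    exists_pos_gauge_diam_thickening_le hh (hbdd n) (hdiam_t n) (hη'pos n)
  set V := fun n => thickening (ρ n) (t n)
  obtain ⟨I, hI⟩ := hE.elim_finite_subcover V (fun n => isOpen_thickening)
    (hEt.trans (iUnion_mono fun n => self_subset_thickening (hρpos n) _))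
  set I' := I.filter fun n => (t n).Nonempty
  have hI' : E ⊆ ⋃ n ∈ I', V n := by
    intro x hx
    obtain ⟨n, hn, hxV⟩ := mem_iUnion₂.1 (hI hx)
    have htn : (t n).Nonempty := by
      by_contra hemp
      simp [V, not_nonempty_iff_eq_empty.1 hemp] at hxV
    exact mem_iUnion₂.2 ⟨n, Finset.mem_filter.2 ⟨hn, htn⟩, hxV⟩
  calc c ≤ ∑ n ∈ I', ENNReal.ofReal (h (diam (V n))) :=
        hc I' V (fun n hn => ⟨isOpen_thickening,
          (Finset.mem_filter.1 hn).2.mono (self_subset_thickening (hρpos n) _),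
          (hbdd n).thickening, hρδ n⟩) hI'
    _ ≤ ∑ n ∈ I', (ENNReal.ofReal (h (diam (t n))) + η' n) := by
        refine Finset.sum_le_sum fun n _ => (ENNReal.ofReal_le_ofReal (hρh n)).trans ?_
        exact ENNReal.ofReal_add_le.trans_eq (congrArg _ ENNReal.ofReal_coe_nnreal)
    _ = (∑ n ∈ I', ⨆ _ : (t n).Nonempty, ENNReal.ofReal (h (ediam (t n)).toReal)) +
          ∑ n ∈ I', (η' n : ℝ≥0∞) := by
        rw [Finset.sum_add_distrib]
        congr 1
        exact Finset.sum_congr rfl fun n hn => by rw [iSup_pos (Finset.mem_filter.1 hn).2]; rfl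
    _ ≤ _ := add_le_add (ENNReal.sum_le_tsum _) ((ENNReal.sum_le_tsum _).trans hη'sum.le)

theorem exists_ge_le_and_succ_lt {d : ℕ → ℝ} (hd : Tendsto d atTop (𝓝 0)) {k₀ : ℕ} {T : ℝ}
    (hT : 0 < T) (hk₀ : T ≤ d k₀) : ∃ k, k₀ ≤ k ∧ T ≤ d k ∧ d (k + 1) < T := by
  by_contra! h
  have hle : ∀ k, k₀ ≤ k → T ≤ d k := by
    intro k hk
    induction k, hk using Nat.le_induction with
    | base => exact hk₀
    | succ k hk ih => exact h k hk ih
  obtain ⟨k, hk, hk₀k⟩ := ((hd.eventually (gt_mem_nhds hT)).and (eventually_ge_atTop k₀)).exists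
  exact (hle k hk₀k).not_gt hk

theorem diam_pos_of_measure_pos {X : Type*} [MetricSpace X] [MeasurableSpace X] {μ : Measure X}
    [NullSingletonClass μ] {s : Set X} (hs : IsBounded s) (hμ : 0 < μ s) : 0 < diam s :=
  diam_pos (not_subsingleton_iff.1 fun h => hμ.ne' (h.measure_zero μ)) hs

theorem subset_closedBall_of_diam_le {X : Type*} [PseudoMetricSpace X] {F V : Set X} {x : X}
    (hx : x ∈ V) (hV : IsBounded V) (hF : IsBounded F) (hFV : (F ∩ V).Nonempty)
    (hdiam : diam F ≤ diam V) : F ⊆ closedBall x (2 * diam V) := by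
  obtain ⟨y, hyF, hyV⟩ := hFV
  intro z hz
  calc dist z x ≤ dist z y + dist y x := dist_triangle z y x
    _ ≤ diam F + diam V :=
        add_le_add (dist_le_diam_of_mem hF hz hyF) (dist_le_diam_of_mem hV hyV hx)
    _ ≤ 2 * diam V := by linarith

theorem ContinuousOn.continuousWithinAt_Ici {α β : Type*} [TopologicalSpace α] [LinearOrder α]
    [ClosedIciTopology α] [TopologicalSpace β] {f : α → β} {a b t : α}
    (hf : ContinuousOn f (Ico a b)) (ht : t ∈ Ico a b) : ContinuousWithinAt f (Ici t) t :=
  (hf t ht).mono_of_mem_nhdsWithin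
    (mem_of_superset (Ico_mem_nhdsGE ht.2) (Ico_subset_Ico_left ht.1))

section Gauge

variable {ε : ℝ} {g h : ℝ → ℝ}

theorem continuousOn_Ico_of_eqOn_sq_mul (hg_cont : ContinuousOn g (Ioo 0 ε))
    (hlim0 : Tendsto (fun t => t ^ 2 * g t) (𝓝[>] 0) (𝓝 0)) (hh0 : h 0 = 0)
    (hht : ∀ t ∈ Ioo 0 ε, h t = t ^ 2 * g t) : ContinuousOn h (Ico 0 ε) := by
  intro t ht
  rcases ht.1.eq_or_lt with rfl | htpos
  · have hright : ContinuousWithinAt h (Ioi 0) 0 := by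
      rw [ContinuousWithinAt, hh0]
      exact hlim0.congr' (eventually_of_mem (Ioo_mem_nhdsGT ht.2) fun t ht => (hht t ht).symm)
    exact (continuousWithinAt_insert_self.2 hright).mono fun s hs => hs.1.eq_or_lt.imp Eq.symm id
  · have hnhds : Ioo 0 ε ∈ 𝓝 t := Ioo_mem_nhds htpos ht.2
    refine (ContinuousAt.congr ?_ (eventually_of_mem hnhds fun s hs => (hht s hs).symm))
      |>.continuousWithinAt
    exact ((continuous_pow 2).continuousAt).mul (hg_cont.continuousAt hnhds)

theorem isGaugeOn_of_eqOn_sq_mul (hε : 0 < ε) (hg_nonneg : ∀ t ∈ Ioo 0 ε, 0 ≤ g t)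
    (hg_cont : ContinuousOn g (Ioo 0 ε)) (hmono : MonotoneOn (fun t => t ^ 2 * g t) (Ioo 0 ε))
    (hlim0 : Tendsto (fun t => t ^ 2 * g t) (𝓝[>] 0) (𝓝 0)) (hh0 : h 0 = 0)
    (hht : ∀ t ∈ Ioo 0 ε, h t = t ^ 2 * g t) :
    IsGaugeOn h ε ∧ ContinuousOn h (Ico 0 ε) := by
  have hcont := continuousOn_Ico_of_eqOn_sq_mul hg_cont hlim0 hh0 hht
  have hnonneg : ∀ t ∈ Ico 0 ε, 0 ≤ h t := by
    intro t ht
    rcases ht.1.eq_or_lt with rfl | htpos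
    · exact hh0.ge
    · rw [hht t ⟨htpos, ht.2⟩]
      exact mul_nonneg (sq_nonneg t) (hg_nonneg t ⟨htpos, ht.2⟩)
  refine ⟨⟨hε, hh0, hnonneg, ?_, fun t ht => hcont.continuousWithinAt_Ici ht⟩, hcont⟩
  intro s hs t ht hst
  rcases hs.1.eq_or_lt with rfl | hspos
  · exact hh0.symm ▸ hnonneg t ht
  · have hs' : s ∈ Ioo 0 ε := ⟨hspos, hs.2⟩
    have ht' : t ∈ Ioo 0 ε := ⟨hspos.trans_le hst, ht.2⟩
    rw [hht s hs', hht t ht']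
    exact hmono hs' ht' hst

end Gauge

structure IsDensityScheme {X : Type*} [TopologicalSpace X] [MeasurableSpace X] (μ : Measure X)
    (𝒜 : ℕ → Set (Set X)) (Δ : ℕ → ℝ) : Prop where
  finite : ∀ k, (𝒜 k).Finite
  pairwise_disjoint : ∀ k, (𝒜 k).Pairwise Disjoint
  isCompact : ∀ k, ∀ F ∈ 𝒜 k, IsCompact F
  measure_pos : ∀ k, ∀ F ∈ 𝒜 k, 0 < μ F
  nested : ∀ k, ∀ F ∈ 𝒜 (k + 1), ∃ P ∈ 𝒜 k, F ⊆ P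
  density_pos : ∀ k, 0 < Δ k
  /-- `dens (⋃₀ 𝒜 (k + 1)) F ≥ Δ k`, with the division cleared. -/
  density_le : ∀ k, ∀ F ∈ 𝒜 k, ENNReal.ofReal (Δ k) * μ F ≤ μ (⋃₀ 𝒜 (k + 1) ∩ F)

def parent {X : Type*} (𝒜 : ℕ → Set (Set X)) (k : ℕ) (G : Set X) : Set X :=
  Classical.epsilon fun P => P ∈ 𝒜 k ∧ G ⊆ P

/-- The mass distribution on `𝒜`: a parent's mass is split among its children in proportion to
their measures. -/
def massWeight {X : Type*} [MeasurableSpace X] (μ : Measure X) (𝒜 : ℕ → Set (Set X)) :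
    ℕ → Set X → ℝ≥0∞
  | 0, F => μ F
  | k + 1, G => massWeight μ 𝒜 k (parent 𝒜 k G) * μ G / μ (⋃₀ 𝒜 (k + 1) ∩ parent 𝒜 k G)

namespace IsDensityScheme

variable {X : Type*} [TopologicalSpace X] [MeasurableSpace X] {μ : Measure X}
  {𝒜 : ℕ → Set (Set X)} {Δ : ℕ → ℝ} (hA : IsDensityScheme μ 𝒜 Δ)
include hA

def level (k : ℕ) : Finset (Set X) := (hA.finite k).toFinset

omit hA in
@[simp] theorem mem_level {hA : IsDensityScheme μ 𝒜 Δ} {k : ℕ} {F : Set X} :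
    F ∈ hA.level k ↔ F ∈ 𝒜 k :=
  Set.Finite.mem_toFinset _

theorem nonempty_of_mem {k : ℕ} {F : Set X} (hF : F ∈ 𝒜 k) : F.Nonempty :=
  nonempty_of_measure_ne_zero (hA.measure_pos k F hF).ne'

theorem eq_of_inter_nonempty {k : ℕ} {F G : Set X} (hF : F ∈ 𝒜 k) (hG : G ∈ 𝒜 k)
    (hFG : (F ∩ G).Nonempty) : F = G :=
  (hA.pairwise_disjoint k).eq hF hG (not_disjoint_iff_nonempty_inter.2 hFG)

theorem subset_of_inter_nonempty {k m : ℕ} (hkm : k ≤ m) {F G : Set X} (hF : F ∈ 𝒜 k)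
    (hG : G ∈ 𝒜 m) (hGF : (G ∩ F).Nonempty) : G ⊆ F := by
  induction m, hkm using Nat.le_induction generalizing G with
  | base => exact (hA.eq_of_inter_nonempty hG hF hGF).le
  | succ m _ ih =>
    obtain ⟨P, hP, hGP⟩ := hA.nested m G hG
    exact hGP.trans (ih hP (hGF.mono (inter_subset_inter_left _ hGP)))

theorem parent_mem_and_subset {k : ℕ} {G : Set X} (hG : G ∈ 𝒜 (k + 1)) :
    parent 𝒜 k G ∈ 𝒜 k ∧ G ⊆ parent 𝒜 k G :=
  Classical.epsilon_spec (hA.nested k G hG)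

theorem parent_eq_iff {k : ℕ} {G P : Set X} (hG : G ∈ 𝒜 (k + 1)) (hP : P ∈ 𝒜 k) :
    parent 𝒜 k G = P ↔ G ⊆ P := by
  obtain ⟨hpar, hGpar⟩ := hA.parent_mem_and_subset hG
  refine ⟨fun h => h ▸ hGpar, fun hGP => hA.eq_of_inter_nonempty hpar hP ?_⟩
  exact (hA.nonempty_of_mem hG).mono (subset_inter hGpar hGP)

theorem measure_sUnion_inter_pos {k : ℕ} {F : Set X} (hF : F ∈ 𝒜 k) :
    0 < μ (⋃₀ 𝒜 (k + 1) ∩ F) :=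
  (ENNReal.mul_pos (by simpa using hA.density_pos k) (hA.measure_pos k F hF).ne').trans_le
    (hA.density_le k F hF)

theorem exists_mem_subset {k m : ℕ} (hkm : k ≤ m) {F : Set X} (hF : F ∈ 𝒜 k) :
    ∃ G ∈ 𝒜 m, G ⊆ F := by
  induction m, hkm using Nat.le_induction with
  | base => exact ⟨F, hF, subset_rfl⟩
  | succ m _ ih =>
    obtain ⟨G, hG, hGF⟩ := ih
    obtain ⟨x, ⟨G', hG', hxG'⟩, hxG⟩ :=
      nonempty_of_measure_ne_zero (hA.measure_sUnion_inter_pos hG).ne'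
    exact ⟨G', hG', (hA.subset_of_inter_nonempty m.le_succ hG hG' ⟨x, hxG', hxG⟩).trans hGF⟩

theorem sUnion_succ_subset (k : ℕ) : ⋃₀ 𝒜 (k + 1) ⊆ ⋃₀ 𝒜 k := by
  rintro x ⟨F, hF, hxF⟩
  obtain ⟨P, hP, hFP⟩ := hA.nested k F hF
  exact ⟨P, hP, hFP hxF⟩

theorem isCompact_sUnion (k : ℕ) : IsCompact (⋃₀ 𝒜 k) :=
  (hA.finite k).isCompact_sUnion (hA.isCompact k)

theorem measure_sUnion_inter_eq_sum [T2Space X] [OpensMeasurableSpace X] {k : ℕ} {P : Set X}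
    (hP : P ∈ 𝒜 k) :
    μ (⋃₀ 𝒜 (k + 1) ∩ P) = ∑ G ∈ hA.level (k + 1) with G ⊆ P, μ G := by
  have hunion : ⋃₀ 𝒜 (k + 1) ∩ P = ⋃ G ∈ (hA.level (k + 1)).filter (· ⊆ P), G := by
    ext x
    simp only [mem_inter_iff, mem_sUnion, mem_iUnion, Finset.mem_filter, mem_level, exists_prop]
    constructor
    · rintro ⟨⟨G, hG, hxG⟩, hxP⟩
      exact ⟨G, ⟨hG, hA.subset_of_inter_nonempty k.le_succ hP hG ⟨x, hxG, hxP⟩⟩, hxG⟩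
    · rintro ⟨G, ⟨hG, hGP⟩, hxG⟩
      exact ⟨⟨G, hG, hxG⟩, hGP hxG⟩
  rw [hunion, measure_biUnion_finset]
  · intro G hG G' hG' hne
    exact hA.pairwise_disjoint _ (mem_level.1 (Finset.mem_filter.1 hG).1)
      (mem_level.1 (Finset.mem_filter.1 hG').1) hne
  · intro G hG
    exact (hA.isCompact _ G (mem_level.1 (Finset.mem_filter.1 hG).1)).measurableSet

theorem sum_children_massWeight [T2Space X] [OpensMeasurableSpace X] [IsFiniteMeasureOnCompacts μ]
    {k : ℕ} {P : Set X} (hP : P ∈ 𝒜 k) :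
    ∑ G ∈ hA.level (k + 1) with G ⊆ P, massWeight μ 𝒜 (k + 1) G = massWeight μ 𝒜 k P := by
  set c := μ (⋃₀ 𝒜 (k + 1) ∩ P)
  have hc0 : c ≠ 0 := (hA.measure_sUnion_inter_pos hP).ne'
  have hctop : c ≠ ∞ :=
    ((measure_mono inter_subset_right).trans_lt (hA.isCompact k P hP).measure_lt_top).ne
  have hchild : ∀ G ∈ (hA.level (k + 1)).filter (· ⊆ P),
      massWeight μ 𝒜 (k + 1) G = massWeight μ 𝒜 k P / c * μ G := by
    intro G hG
    obtain ⟨hG, hGP⟩ := Finset.mem_filter.1 hG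
    rw [massWeight, (hA.parent_eq_iff (mem_level.1 hG) hP).2 hGP, div_eq_mul_inv,
      div_eq_mul_inv]
    ring
  rw [Finset.sum_congr rfl hchild, ← Finset.mul_sum, ← hA.measure_sUnion_inter_eq_sum hP,
    ENNReal.div_mul_cancel hc0 hctop]

theorem sum_massWeight_subset [T2Space X] [OpensMeasurableSpace X] [IsFiniteMeasureOnCompacts μ]
    {k m : ℕ} (hkm : k ≤ m) {F : Set X} (hF : F ∈ 𝒜 k) :
    ∑ G ∈ hA.level m with G ⊆ F, massWeight μ 𝒜 m G = massWeight μ 𝒜 k F := by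
  induction m, hkm using Nat.le_induction with
  | base =>
    refine Finset.sum_eq_single_of_mem F (Finset.mem_filter.2 ⟨mem_level.2 hF, subset_rfl⟩) ?_
    intro G hG hGF
    obtain ⟨hG, hGsub⟩ := Finset.mem_filter.1 hG
    exact absurd (hA.eq_of_inter_nonempty (mem_level.1 hG) hF
      ((hA.nonempty_of_mem (mem_level.1 hG)).mono (subset_inter subset_rfl hGsub))) hGF
  | succ m hkm ih =>
    rw [← ih, ← Finset.sum_fiberwise_of_maps_to (g := parent 𝒜 m)]
    · refine Finset.sum_congr rfl fun G hG => ?_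
      rw [← hA.sum_children_massWeight (mem_level.1 (Finset.mem_filter.1 hG).1),
        Finset.filter_filter]
      refine Finset.sum_congr (Finset.filter_congr fun G' hG' => ?_) fun _ _ => rfl
      rw [hA.parent_eq_iff (mem_level.1 hG') (mem_level.1 (Finset.mem_filter.1 hG).1)]
      exact ⟨fun h => h.2, fun h => ⟨h.trans (Finset.mem_filter.1 hG).2, h⟩⟩
    · intro G' hG'
      obtain ⟨hG', hG'F⟩ := Finset.mem_filter.1 hG'
      obtain ⟨hpar, hsub⟩ := hA.parent_mem_and_subset (mem_level.1 hG')
      refine Finset.mem_filter.2 ⟨mem_level.2 hpar, hA.subset_of_inter_nonempty hkm hF hpar ?_⟩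
      exact (hA.nonempty_of_mem (mem_level.1 hG')).mono (subset_inter hsub hG'F)

theorem prod_mul_massWeight_le {k : ℕ} {F : Set X} (hF : F ∈ 𝒜 k) :
    ENNReal.ofReal (∏ j ∈ Finset.range k, Δ j) * massWeight μ 𝒜 k F ≤ μ F := by
  induction k generalizing F with
  | zero => simp [massWeight]
  | succ k ih =>
    obtain ⟨hP, -⟩ := hA.parent_mem_and_subset hF
    set P := parent 𝒜 k F
    set c := μ (⋃₀ 𝒜 (k + 1) ∩ P)
    have hprod : 0 ≤ ∏ j ∈ Finset.range k, Δ j :=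
      Finset.prod_nonneg fun j _ => (hA.density_pos j).le
    calc ENNReal.ofReal (∏ j ∈ Finset.range (k + 1), Δ j) * massWeight μ 𝒜 (k + 1) F
        = ENNReal.ofReal (Δ k) * (ENNReal.ofReal (∏ j ∈ Finset.range k, Δ j) *
            massWeight μ 𝒜 k P) * (μ F / c) := by
          rw [massWeight, Finset.prod_range_succ, ENNReal.ofReal_mul hprod, mul_div_assoc]
          ring
      _ ≤ ENNReal.ofReal (Δ k) * μ P * (μ F / c) := by gcongr; exact ih hP
      _ ≤ c * (μ F / c) := by gcongr; exact hA.density_le k P hP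
      _ ≤ μ F := ENNReal.mul_div_le

theorem isCompact_iInter_sUnion [T2Space X] : IsCompact (⋂ k, ⋃₀ 𝒜 k) :=
  (hA.isCompact_sUnion 0).of_isClosed_subset
    (isClosed_iInter fun k => (hA.isCompact_sUnion k).isClosed) (iInter_subset _ 0)

theorem iInter_sUnion_inter_nonempty [T2Space X] {k : ℕ} {F : Set X} (hF : F ∈ 𝒜 k) :
    ((⋂ n, ⋃₀ 𝒜 n) ∩ F).Nonempty := by
  have hanti : Antitone fun n => ⋃₀ 𝒜 n := antitone_nat_of_succ_le hA.sUnion_succ_subset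
  obtain ⟨x, hx⟩ := IsCompact.nonempty_iInter_of_sequence_nonempty_isCompact_isClosed
    (fun n => ⋃₀ 𝒜 (k + n) ∩ F)
    (fun n => inter_subset_inter_left F (hA.sUnion_succ_subset (k + n)))
    (fun n => by
      obtain ⟨G, hG, hGF⟩ := hA.exists_mem_subset (Nat.le_add_right k n) hF
      exact (hA.nonempty_of_mem hG).mono (subset_inter (subset_sUnion_of_mem hG) hGF))
    ((hA.isCompact_sUnion _).inter_right (hA.isCompact k F hF).isClosed)
    (fun n => (hA.isCompact_sUnion _).isClosed.inter (hA.isCompact k F hF).isClosed)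
  rw [mem_iInter] at hx
  exact ⟨x, mem_iInter.2 fun n => hanti (Nat.le_add_left n k) (hx n).1, (hx 0).2⟩

/-- Every member of `𝒜 (I.sup k)` meets the limit set, hence lies inside a member met by some cover
set; the weights add up along the tree. -/
theorem measure_le_sum_massWeight [T2Space X] [OpensMeasurableSpace X]
    [IsFiniteMeasureOnCompacts μ] {ι : Type*} (I : Finset ι) (k : ι → ℕ) (V : ι → Set X)
    (hcover : ⋂ n, ⋃₀ 𝒜 n ⊆ ⋃ i ∈ I, V i) {F₀ : Set X} (hF₀ : F₀ ∈ 𝒜 0) :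
    μ F₀ ≤ ∑ i ∈ I, ∑ F ∈ hA.level (k i) with (F ∩ V i).Nonempty, massWeight μ 𝒜 (k i) F := by
  set m := I.sup k
  have hcaught : ∀ G ∈ 𝒜 m, ∃ i ∈ I, ∃ F ∈ 𝒜 (k i), (F ∩ V i).Nonempty ∧ G ⊆ F := by
    intro G hG
    obtain ⟨x, hxE, hxG⟩ := hA.iInter_sUnion_inter_nonempty hG
    obtain ⟨i, hi, hxV⟩ := mem_iUnion₂.1 (hcover hxE)
    obtain ⟨F, hF, hxF⟩ := mem_iInter.1 hxE (k i)
    exact ⟨i, hi, F, hF, ⟨x, hxF, hxV⟩,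
      hA.subset_of_inter_nonempty (Finset.le_sup hi) hF hG ⟨x, hxG, hxF⟩⟩
  calc μ F₀ = ∑ G ∈ hA.level m with G ⊆ F₀, massWeight μ 𝒜 m G :=
        (hA.sum_massWeight_subset (Nat.zero_le m) hF₀).symm
    _ ≤ ∑ G ∈ hA.level m, ∑ i ∈ I, ∑ F ∈ hA.level (k i) with (F ∩ V i).Nonempty,
          if G ⊆ F then massWeight μ 𝒜 m G else 0 := by
        refine (Finset.sum_le_sum_of_subset (Finset.filter_subset _ _)).trans
          (Finset.sum_le_sum fun G hG => ?_)
        obtain ⟨i, hi, F, hF, hFV, hGF⟩ := hcaught G (mem_level.1 hG)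
        refine le_trans ?_ (Finset.single_le_sum (fun _ _ => zero_le) hi)
        refine le_trans ?_ (Finset.single_le_sum (fun _ _ => zero_le)
          (Finset.mem_filter.2 ⟨mem_level.2 hF, hFV⟩))
        rw [if_pos hGF]
    _ = ∑ i ∈ I, ∑ F ∈ hA.level (k i) with (F ∩ V i).Nonempty,
          ∑ G ∈ hA.level m with G ⊆ F, massWeight μ 𝒜 m G := by
        rw [Finset.sum_comm]
        refine Finset.sum_congr rfl fun i _ => ?_
        rw [Finset.sum_comm]
        exact Finset.sum_congr rfl fun F _ => (Finset.sum_filter _ _).symm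
    _ = _ := by
        refine Finset.sum_congr rfl fun i hi => Finset.sum_congr rfl fun F hF => ?_
        exact hA.sum_massWeight_subset (Finset.le_sup hi) (mem_level.1 (Finset.mem_filter.1 hF).1)

end IsDensityScheme

namespace IsDensityScheme

variable {𝒜 : ℕ → Set (Set ℂ)} {Δ : ℕ → ℝ} (hA : IsDensityScheme volume 𝒜 Δ)
include hA

theorem sum_volume_le_of_diam_le {k : ℕ} {V : Set ℂ}
    (hV : IsBounded V) (hdiam : ∀ F ∈ 𝒜 k, diam F ≤ diam V) :
    ∑ F ∈ hA.level k with (F ∩ V).Nonempty, volume F ≤ ENNReal.ofReal (4 * π * diam V ^ 2) := by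
  rcases V.eq_empty_or_nonempty with rfl | ⟨x, hx⟩
  · simp
  have hmem : ∀ F ∈ (hA.level k).filter (fun F => (F ∩ V).Nonempty), F ∈ 𝒜 k ∧ (F ∩ V).Nonempty :=
    fun F hF => by simpa using hF
  rw [← measure_biUnion_finset
    (fun F hF G hG hne => hA.pairwise_disjoint k (hmem F hF).1 (hmem G hG).1 hne)
    (fun F hF => (hA.isCompact k F (hmem F hF).1).measurableSet)]
  calc volume (⋃ F ∈ (hA.level k).filter (fun F => (F ∩ V).Nonempty), F)
      ≤ volume (closedBall x (2 * diam V)) :=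
        measure_mono (iUnion₂_subset fun F hF => subset_closedBall_of_diam_le hx hV
          (hA.isCompact k F (hmem F hF).1).isBounded (hmem F hF).2 (hdiam F (hmem F hF).1))
    _ = ENNReal.ofReal (4 * π * diam V ^ 2) := by
        rw [Complex.volume_closedBall, ← ENNReal.ofReal_pow (by positivity),
          ← ENNReal.ofReal_coe_nnreal, NNReal.coe_real_pi, ← ENNReal.ofReal_mul (by positivity)]
        ring_nf

theorem ofReal_mul_sum_massWeight_le {k : ℕ} {V : Set ℂ}
    (hV : IsBounded V) (hdiam : ∀ F ∈ 𝒜 k, diam F ≤ diam V) {M c : ℝ} (hc : 0 ≤ c)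
    (hM : 4 * π * M ≤ c * ∏ j ∈ Finset.range k, Δ j) :
    ENNReal.ofReal M * ∑ F ∈ hA.level k with (F ∩ V).Nonempty, massWeight volume 𝒜 k F ≤
      ENNReal.ofReal (diam V ^ 2 * c) := by
  have h4π : ENNReal.ofReal (4 * π) ≠ 0 := (ENNReal.ofReal_pos.2 (by positivity)).ne'
  refine (ENNReal.mul_le_mul_iff_right h4π ENNReal.ofReal_ne_top).1 ?_
  calc ENNReal.ofReal (4 * π) * (ENNReal.ofReal M *
        ∑ F ∈ hA.level k with (F ∩ V).Nonempty, massWeight volume 𝒜 k F)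
      = ENNReal.ofReal (4 * π * M) *
        ∑ F ∈ hA.level k with (F ∩ V).Nonempty, massWeight volume 𝒜 k F := by
        rw [ENNReal.ofReal_mul (p := 4 * π) (by positivity), mul_assoc]
    _ ≤ ENNReal.ofReal c * ∑ F ∈ hA.level k with (F ∩ V).Nonempty,
          ENNReal.ofReal (∏ j ∈ Finset.range k, Δ j) * massWeight volume 𝒜 k F := by
        rw [← Finset.mul_sum, ← mul_assoc, ← ENNReal.ofReal_mul hc]
        gcongr
    _ ≤ ENNReal.ofReal c * ENNReal.ofReal (4 * π * diam V ^ 2) := by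
        gcongr
        refine le_trans (Finset.sum_le_sum fun F hF => ?_) (hA.sum_volume_le_of_diam_le hV hdiam)
        exact hA.prod_mul_massWeight_le (mem_level.1 (Finset.mem_filter.1 hF).1)
    _ = ENNReal.ofReal (4 * π) * ENNReal.ofReal (diam V ^ 2 * c) := by
        rw [← ENNReal.ofReal_mul hc, ← ENNReal.ofReal_mul (by positivity)]
        ring_nf

theorem measure_mul_le_sum_gauge {d : ℕ → ℝ}
    (hd : Tendsto d atTop (𝓝 0)) (hdiam : ∀ k, ∀ F ∈ 𝒜 k, diam F ≤ d k) {ε : ℝ} {g h : ℝ → ℝ}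
    (hg_nonneg : ∀ t ∈ Ioo 0 ε, 0 ≤ g t) (hg_anti : AntitoneOn g (Ioo 0 ε))
    (hht : ∀ t ∈ Ioo 0 ε, h t = t ^ 2 * g t) {M : ℝ} {k₀ : ℕ}
    (hk₀ : ∀ k, k₀ ≤ k → 4 * π * M ≤ g (d k) * ∏ j ∈ Finset.range (k + 1), Δ j ∧ d k < ε)
    {ι : Type*} (I : Finset ι) (V : ι → Set ℂ)
    (hV : ∀ i ∈ I, IsOpen (V i) ∧ (V i).Nonempty ∧ IsBounded (V i) ∧ diam (V i) ≤ d k₀)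
    (hcover : ⋂ n, ⋃₀ 𝒜 n ⊆ ⋃ i ∈ I, V i) {F₀ : Set ℂ} (hF₀ : F₀ ∈ 𝒜 0) :
    volume F₀ * ENNReal.ofReal M ≤ ∑ i ∈ I, ENNReal.ofReal (h (diam (V i))) := by
  have hdiam_pos : ∀ i ∈ I, 0 < diam (V i) := fun i hi =>
    diam_pos_of_measure_pos (hV i hi).2.2.1 ((hV i hi).1.measure_pos volume (hV i hi).2.1)
  have hlevel : ∀ i ∈ I, ∃ k, k₀ ≤ k ∧ diam (V i) ≤ d k ∧ d (k + 1) < diam (V i) :=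
    fun i hi => exists_ge_le_and_succ_lt hd (hdiam_pos i hi) (hV i hi).2.2.2
  choose! k hk using hlevel
  calc volume F₀ * ENNReal.ofReal M
      ≤ (∑ i ∈ I, ∑ F ∈ hA.level (k i + 1) with (F ∩ V i).Nonempty,
          massWeight volume 𝒜 (k i + 1) F) * ENNReal.ofReal M := by
        gcongr
        exact hA.measure_le_sum_massWeight I (fun i => k i + 1) V hcover hF₀
    _ = ∑ i ∈ I, ENNReal.ofReal M * ∑ F ∈ hA.level (k i + 1) with (F ∩ V i).Nonempty,
          massWeight volume 𝒜 (k i + 1) F := by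
        rw [Finset.sum_mul]
        exact Finset.sum_congr rfl fun _ _ => mul_comm _ _
    _ ≤ _ := by
        refine Finset.sum_le_sum fun i hi => ?_
        obtain ⟨hk₀i, hTd, hdT⟩ := hk i hi
        obtain ⟨hM, hdε⟩ := hk₀ (k i) hk₀i
        have hT : diam (V i) ∈ Ioo 0 ε := ⟨hdiam_pos i hi, hTd.trans_lt hdε⟩
        have hdk : d (k i) ∈ Ioo 0 ε := ⟨hT.1.trans_le hTd, hdε⟩
        rw [hht _ hT]
        refine (hA.ofReal_mul_sum_massWeight_le (hV i hi).2.2.1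
          (fun F hF => (hdiam _ F hF).trans hdT.le) (hg_nonneg _ hdk) hM).trans ?_
        exact ENNReal.ofReal_le_ofReal
          (mul_le_mul_of_nonneg_left (hg_anti hT hdk hTd) (sq_nonneg _))

end IsDensityScheme

theorem stmt_9_general (𝒜 : ℕ → Set (Set ℂ))
    (hfin : ∀ k, (𝒜 k).Finite) (hne : (𝒜 0).Nonempty)
    (hdisj : ∀ k, (𝒜 k).Pairwise Disjoint)
    (hcpt : ∀ k, ∀ F ∈ 𝒜 k, IsCompact F)
    (hpos : ∀ k, ∀ F ∈ 𝒜 k, 0 < volume F)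
    (hnested : ∀ k, ∀ F ∈ 𝒜 (k + 1), ∃ F' ∈ 𝒜 k, F ⊆ F')
    (d : ℕ → ℝ) (hd_lim : Tendsto d atTop (nhds 0))
    (hdiam : ∀ k, ∀ F ∈ 𝒜 k, Metric.diam F ≤ d k)
    (Δ : ℕ → ℝ) (hΔpos : ∀ k, 0 < Δ k)
    (hdens : ∀ k, ∀ F ∈ 𝒜 k, ENNReal.ofReal (Δ k) ≤ dens (⋃₀ 𝒜 (k + 1)) F)
    (ε : ℝ) (hε : 0 < ε) (g : ℝ → ℝ)
    (hg_nonneg : ∀ t ∈ Set.Ioo 0 ε, 0 ≤ g t)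
    (hg_anti : AntitoneOn g (Set.Ioo 0 ε))
    (hg_cont : ContinuousOn g (Set.Ioo 0 ε))
    (hmono : MonotoneOn (fun t => t ^ 2 * g t) (Set.Ioo 0 ε))
    (hlim0 : Tendsto (fun t => t ^ 2 * g t) (nhdsWithin 0 (Set.Ioi 0)) (nhds 0))
    (hdiv : Tendsto (fun k => g (d k) * ∏ j ∈ Finset.range (k + 1), Δ j) atTop atTop)
    (h : ℝ → ℝ) (hh0 : h 0 = 0) (hht : ∀ t ∈ Set.Ioo (0:ℝ) ε, h t = t ^ 2 * g t) :
    (IsGaugeOn h ε ∧ ContinuousOn h (Set.Ico 0 ε)) ∧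
      gaugeMeasure h (⋂ k, ⋃₀ 𝒜 k) = ∞ := by
  have hgauge := isGaugeOn_of_eqOn_sq_mul hε hg_nonneg hg_cont hmono hlim0 hh0 hht
  refine ⟨hgauge, ENNReal.eq_top_of_forall_nnreal_le fun r => ?_⟩
  have hA : IsDensityScheme volume 𝒜 Δ := ⟨hfin, hdisj, hcpt, hpos, hnested, hΔpos,
    fun k F hF => (ENNReal.le_div_iff_mul_le (Or.inl (hpos k F hF).ne')
      (Or.inl (hcpt k F hF).measure_lt_top.ne)).1 (hdens k F hF)⟩
  obtain ⟨F₀, hF₀⟩ := hne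
  set v := (volume F₀).toReal
  have hv : 0 < v := ENNReal.toReal_pos (hpos 0 F₀ hF₀).ne' (hcpt 0 F₀ hF₀).measure_lt_top.ne
  obtain ⟨k₀, hk₀⟩ : ∃ k₀, ∀ k, k₀ ≤ k →
      4 * π * (r / v) ≤ g (d k) * ∏ j ∈ Finset.range (k + 1), Δ j ∧ d k < ε :=
    eventually_atTop.1 ((hdiv.eventually_ge_atTop _).and (hd_lim.eventually (gt_mem_nhds hε)))
  obtain ⟨F, hF, -⟩ := hA.exists_mem_subset (Nat.zero_le k₀) hF₀
  have hδ : 0 < d k₀ := (diam_pos_of_measure_pos (hcpt k₀ F hF).isBounded (hpos k₀ F hF)).trans_le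
    (hdiam k₀ F hF)
  refine le_mkMetric_of_forall_finite_open_cover hδ
    (fun t ht => hgauge.1.2.2.2.2 t ⟨ht.1, ht.2.trans (hk₀ k₀ le_rfl).2⟩)
    hA.isCompact_iInter_sUnion fun I V hV hcover => ?_
  calc (r : ℝ≥0∞) = volume F₀ * ENNReal.ofReal (r / v) := by
        rw [← ENNReal.ofReal_toReal (hcpt 0 F₀ hF₀).measure_lt_top.ne, ← ENNReal.ofReal_mul hv.le,
          mul_div_cancel₀ _ hv.ne', ENNReal.ofReal_coe_nnreal]
    _ ≤ _ := hA.measure_mul_le_sum_gauge hd_lim hdiam hg_nonneg hg_anti hht hk₀ I V hV hcover hF₀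

/-- Lemma 3.3: a family satisfying the nesting conditions whose densities
and diameters are compatible with `g` yields a set of infinite `H^h`-measure for
`h(t) = t² g(t)`. -/
theorem stmt_9 (𝒜 : ℕ → Set (Set ℂ))
    (hfin : ∀ k, (𝒜 k).Finite) (hne : (𝒜 0).Nonempty)
    (hdisj : ∀ k, (𝒜 k).Pairwise Disjoint)
    (hcpt : ∀ k, ∀ F ∈ 𝒜 k, IsCompact F)
    (hconn : ∀ k, ∀ F ∈ 𝒜 k, IsConnected F)
    (hpos : ∀ k, ∀ F ∈ 𝒜 k, 0 < volume F)
    (hnested : ∀ k, ∀ F ∈ 𝒜 (k + 1), ∃ F' ∈ 𝒜 k, F ⊆ F')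
    (d : ℕ → ℝ) (hd_anti : Antitone d) (hd_lim : Tendsto d atTop (nhds 0))
    (hdiam : ∀ k, ∀ F ∈ 𝒜 k, Metric.diam F ≤ d k)
    (Δ : ℕ → ℝ) (hΔpos : ∀ k, 0 < Δ k)
    (hdens : ∀ k, ∀ F ∈ 𝒜 k, ENNReal.ofReal (Δ k) ≤ dens (⋃₀ 𝒜 (k + 1)) F)
    (ε : ℝ) (hε : 0 < ε) (g : ℝ → ℝ)
    (hg_nonneg : ∀ t ∈ Set.Ioo 0 ε, 0 ≤ g t)
    (hg_anti : AntitoneOn g (Set.Ioo 0 ε))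
    (hg_cont : ContinuousOn g (Set.Ioo 0 ε))
    (hmono : MonotoneOn (fun t => t ^ 2 * g t) (Set.Ioo 0 ε))
    (hlim0 : Tendsto (fun t => t ^ 2 * g t) (nhdsWithin 0 (Set.Ioi 0)) (nhds 0))
    (hdiv : Tendsto (fun k => g (d k) * ∏ j ∈ Finset.range (k + 1), Δ j) atTop atTop)
    (h : ℝ → ℝ) (hh0 : h 0 = 0) (hht : ∀ t ∈ Set.Ioo (0:ℝ) ε, h t = t ^ 2 * g t) :
    (IsGaugeOn h ε ∧ ContinuousOn h (Set.Ico 0 ε)) ∧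
      gaugeMeasure h (⋂ k, ⋃₀ 𝒜 k) = ∞ :=
  stmt_9_general 𝒜 hfin hne hdisj hcpt hpos hnested d hd_lim hdiam Δ hΔpos hdens ε hε g hg_nonneg
    hg_anti hg_cont hmono hlim0 hdiv h hh0 hht
end
end

section
/- Let U ⊆ ℂ be bounded and open, let f : U → ℂ be holomorphic with bounded distortion, and let A ⊆ U be Lebesgue-measurable. Then f(A) is Lebesgue-measurable and dens(A, U) ≤ D(f)²·dens(f(A), f(U)). -/
open MeasureTheory Filter Set Metric
open scoped ENNReal

noncomputable section

/-- The set of difference quotients `|f z − f w|/|z − w|` over pairs of distinct points of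
`A`. -/
def ratioSet (f : ℂ → ℂ) (A : Set ℂ) : Set ℝ :=
  {q | ∃ z ∈ A, ∃ w ∈ A, z ≠ w ∧ q = dist (f z) (f w) / dist z w}

/-- `f` has bounded distortion on `A`: it is bilipschitz, i.e. the difference quotients are
bounded above and bounded below away from `0`. -/
def HasBoundedDistortion (f : ℂ → ℂ) (A : Set ℂ) : Prop :=
  (∃ c > (0:ℝ), ∀ q ∈ ratioSet f A, c ≤ q) ∧ BddAbove (ratioSet f A)

/-- The distortion `D(f) = C_f / c_f` of `f` on `A`. -/
def distortion (f : ℂ → ℂ) (A : Set ℂ) : ℝ := sSup (ratioSet f A) / sInf (ratioSet f A)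

/-!
The difference quotients of `f` on `U` lie in `[c_f, C_f]`, so `f` is `C_f`-Lipschitz on `U` and
its inverse is `c_f⁻¹`-Lipschitz on `f(U)`. A `K`-Lipschitz map of the plane multiplies area by at
most `K²`, whence `|A| ≤ c_f⁻² |f(A)|` and `|f(U)| ≤ C_f² |U|`; multiplying the two gives the
density bound. For measurability, `A` is a Borel set up to a null set: the injective continuous
image of a Borel set is Borel (Lusin–Souslin) and the Lipschitz image of a null set is null.
-/

open scoped NNReal
open Module

theorem injOn_of_dist_le_mul_dist {X Y : Type*} [MetricSpace X] [PseudoMetricSpace Y] {K : ℝ}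
    {f : X → Y} {s : Set X} (hf : ∀ z ∈ s, ∀ w ∈ s, dist z w ≤ K * dist (f z) (f w)) :
    InjOn f s := fun z hz w hw hzw ↦
  dist_le_zero.1 (by simpa [hzw] using hf z hz w hw)

section Lipschitz

variable {E : Type*} [NormedAddCommGroup E] [NormedSpace ℝ E] [FiniteDimensional ℝ E]
  [MeasurableSpace E] [BorelSpace E] (μ : Measure E) [μ.IsAddHaarMeasure]

/-- Additive Haar measures are multiples of `μH[finrank ℝ E]`, for which this is the classical
Hausdorff-measure estimate. -/
theorem LipschitzOnWith.measure_image_le {K : ℝ≥0} {f : E → E} {s : Set E}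
    (hf : LipschitzOnWith K f s) : μ (f '' s) ≤ (K : ℝ≥0∞) ^ finrank ℝ E * μ s := by
  set c := Measure.addHaarScalarFactor (μH[finrank ℝ E] : Measure E) μ
  have hc : (c : ℝ≥0∞) ≠ 0 := by
    exact_mod_cast (Measure.addHaarScalarFactor_pos_of_isAddHaarMeasure _ _).ne'
  have hH := hf.hausdorffMeasure_image_le (d := finrank ℝ E) (Nat.cast_nonneg _)
  rw [Measure.isAddLeftInvariant_eq_smul (μH[finrank ℝ E] : Measure E) μ] at hH
  simp only [Measure.smul_apply, ENNReal.smul_def, smul_eq_mul, ENNReal.rpow_natCast] at hH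
  rw [mul_left_comm] at hH
  exact (ENNReal.mul_le_mul_iff_right hc ENNReal.coe_ne_top).1 hH

theorem measure_le_of_dist_le_mul_dist {K : ℝ} {f : E → E} {s : Set E}
    (hf : ∀ z ∈ s, ∀ w ∈ s, dist z w ≤ K * dist (f z) (f w)) :
    μ s ≤ ENNReal.ofReal K ^ finrank ℝ E * μ (f '' s) := by
  have hinj := injOn_of_dist_le_mul_dist hf
  have hinv : LipschitzOnWith K.toNNReal (Function.invFunOn f s) (f '' s) := by
    refine LipschitzOnWith.of_dist_le' ?_
    rintro _ ⟨z, hz, rfl⟩ _ ⟨w, hw, rfl⟩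
    rw [hinj.leftInvOn_invFunOn hz, hinj.leftInvOn_invFunOn hw]
    exact hf z hz w hw
  calc μ s = μ (Function.invFunOn f s '' (f '' s)) := by rw [hinj.invFunOn_image subset_rfl]
    _ ≤ _ := hinv.measure_image_le μ

theorem MeasureTheory.NullMeasurableSet.image_of_lipschitzOnWith {K : ℝ≥0} {f : E → E}
    {s : Set E} (hs : NullMeasurableSet s μ) (hf : LipschitzOnWith K f s) (hinj : InjOn f s) :
    NullMeasurableSet (f '' s) μ := by
  obtain ⟨t, hts, ht, hst⟩ := hs.exists_measurable_subset_ae_eq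
  have hnull : μ (f '' (s \ t)) = 0 := by
    refine le_antisymm ?_ zero_le
    calc μ (f '' (s \ t)) ≤ (K : ℝ≥0∞) ^ finrank ℝ E * μ (s \ t) :=
          (hf.mono sdiff_subset).measure_image_le μ
      _ = 0 := by rw [(ae_eq_set.1 hst).2, mul_zero]
  rw [← union_sdiff_cancel hts, image_union]
  exact (ht.image_of_continuousOn_injOn (hf.continuousOn.mono hts)
    (hinj.mono hts)).nullMeasurableSet.union (.of_null hnull)

end Lipschitz

/-- The division conventions of `ℝ≥0∞` make every degenerate case hold, with `K ≠ ∞` ruling out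
`v = ∞` for finite `u`. -/
theorem ENNReal.div_le_mul_mul_div {a u m v k K : ℝ≥0∞} (hau : a ≤ u) (hmv : m ≤ v)
    (ha : a ≤ k * m) (hv : v ≤ K * u) (hK : K ≠ ∞) : a / u ≤ K * k * (m / v) := by
  rcases eq_or_ne u 0 with rfl | hu
  · simp [nonpos_iff_eq_zero.1 hau]
  rcases eq_or_ne u ∞ with rfl | hu'
  · simp
  rcases eq_or_ne v 0 with rfl | hv₀
  · simp_all
  have hv' : v ≠ ∞ := ne_top_of_le_ne_top (mul_ne_top hK hu') hv
  rw [ENNReal.div_le_iff hu hu']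
  calc a ≤ k * (m / v * v) := by rwa [ENNReal.div_mul_cancel hv₀ hv']
    _ ≤ k * (m / v * (K * u)) := by gcongr
    _ = K * k * (m / v) * u := by ring

section Distortion

variable {f : ℂ → ℂ} {A : Set ℂ}

theorem dist_le_sSup_ratioSet_mul (h : BddAbove (ratioSet f A)) :
    ∀ z ∈ A, ∀ w ∈ A, dist (f z) (f w) ≤ sSup (ratioSet f A) * dist z w := by
  intro z hz w hw
  rcases eq_or_ne z w with rfl | hne
  · simp
  rw [← div_le_iff₀ (dist_pos.2 hne)]
  exact le_csSup h ⟨z, hz, w, hw, hne, rfl⟩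

theorem dist_le_inv_sInf_ratioSet_mul (h : HasBoundedDistortion f A) :
    ∀ z ∈ A, ∀ w ∈ A, dist z w ≤ (sInf (ratioSet f A))⁻¹ * dist (f z) (f w) := by
  obtain ⟨⟨c, hc, hlow⟩, -⟩ := h
  intro z hz w hw
  rcases eq_or_ne z w with rfl | hne
  · simp
  have hq : dist (f z) (f w) / dist z w ∈ ratioSet f A := ⟨z, hz, w, hw, hne, rfl⟩
  have hInf : 0 < sInf (ratioSet f A) := hc.trans_le (le_csInf ⟨_, hq⟩ hlow)
  rw [inv_mul_eq_div, le_div_iff₀ hInf, ← le_div_iff₀' (dist_pos.2 hne)]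
  exact csInf_le ⟨c, hlow⟩ hq

theorem ofReal_distortion_sq :
    ENNReal.ofReal (distortion f A ^ 2) =
      ENNReal.ofReal (sSup (ratioSet f A)) ^ 2 * ENNReal.ofReal (sInf (ratioSet f A))⁻¹ ^ 2 := by
  have hnonneg : ∀ q ∈ ratioSet f A, 0 ≤ q := by
    rintro _ ⟨z, -, w, -, -, rfl⟩
    positivity
  rw [distortion, div_eq_mul_inv, mul_pow, ENNReal.ofReal_mul (by positivity),
    ENNReal.ofReal_pow (Real.sSup_nonneg hnonneg),
    ENNReal.ofReal_pow (inv_nonneg.2 (Real.sInf_nonneg hnonneg))]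

end Distortion

theorem stmt_17_general (U : Set ℂ) (f : ℂ → ℂ)
    (hdist : HasBoundedDistortion f U)
    (A : Set ℂ) (hAU : A ⊆ U) (hA : NullMeasurableSet A volume) :
    NullMeasurableSet (f '' A) volume ∧
      dens A U ≤ ENNReal.ofReal (distortion f U ^ 2) * dens (f '' A) (f '' U) := by
  have hlip : LipschitzOnWith (sSup (ratioSet f U)).toNNReal f U :=
    .of_dist_le' (dist_le_sSup_ratioSet_mul hdist.2)
  have hcolip := dist_le_inv_sInf_ratioSet_mul hdist
  refine ⟨hA.image_of_lipschitzOnWith volume (hlip.mono hAU)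
    ((injOn_of_dist_le_mul_dist hcolip).mono hAU), ?_⟩
  have hvolA := measure_le_of_dist_le_mul_dist volume fun z hz w hw ↦
    hcolip z (hAU hz) w (hAU hw)
  have hvolfU := hlip.measure_image_le volume
  rw [Complex.finrank_real_complex] at hvolA hvolfU
  rw [dens, dens, inter_eq_self_of_subset_left hAU,
    inter_eq_self_of_subset_left (image_mono hAU), ofReal_distortion_sq]
  exact ENNReal.div_le_mul_mul_div (measure_mono hAU) (measure_mono (image_mono hAU))
    hvolA hvolfU (by finiteness)

/-- Lemma 2.5(c): a holomorphic map of bounded distortion on a bounded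
open set maps measurable sets to measurable sets and distorts densities by at most the
square of the distortion. -/
theorem stmt_17 (U : Set ℂ) (hUopen : IsOpen U) (hUbdd : Bornology.IsBounded U)
    (f : ℂ → ℂ) (hdiff : DifferentiableOn ℂ f U)
    (hdist : HasBoundedDistortion f U)
    (A : Set ℂ) (hAU : A ⊆ U) (hA : NullMeasurableSet A volume) :
    NullMeasurableSet (f '' A) volume ∧
      dens A U ≤ ENNReal.ofReal (distortion f U ^ 2) * dens (f '' A) (f '' U) :=
  stmt_17_general U f hdist A hAU hA
end
end

section
/- Let λ ∈ ℂ \ {0}, λ' ∈ (0, 1/e), γ > 0 and R > 0. If H^{h_{λ',γ}}(I_R(E_λ)) = 0, then H^{h_{λ',γ}}(I(E_λ)) = 0. -/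
/-!
Every escaping point has an iterate in `I_R(E_λ)`, because `|E_λ(z)| = |λ| e^{Re z}`; hence
`I(E_λ) ⊆ ⋃_N E_λ^{-N}(I_R(E_λ))` and it suffices that `E_λ`-preimages of `h`-null sets are
`h`-null. Since `E_λ' = E_λ` never vanishes, `E_λ` is locally bi-Lipschitz, and a bi-Lipschitz
map changes diameters by a bounded factor. As `Φ_λ'` is increasing with `Φ_λ'(β) = 0`, the gauge
satisfies `h(s) ≤ a² h(t)` for small `t ≤ s ≤ a t`, which is all the covering argument needs.
-/

open MeasureTheory Filter Set Metric
open scoped ENNReal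

noncomputable section

/-- The exponential map `E_λ(z) = λ·exp z`. -/
def expMap (lam : ℂ) : ℂ → ℂ := fun z => lam * Complex.exp z

/-- The Fatou set: points possessing a neighborhood on which the iterates are equicontinuous. -/
def fatouSet (f : ℂ → ℂ) : Set ℂ :=
  {z | ∃ U ∈ nhds z, EquicontinuousOn (fun n : ℕ => f^[n]) U}

/-- The Julia set: the complement of the Fatou set. -/
def juliaSet (f : ℂ → ℂ) : Set ℂ := (fatouSet f)ᶜ

/-- The escaping set. -/
def escapingSet (f : ℂ → ℂ) : Set ℂ :=
  {z | Tendsto (fun n : ℕ => ‖f^[n] z‖) atTop atTop}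

/-- `I_R(E_λ)`: escaping points all of whose iterates have real part at least `R`. -/
def escapingSetGE (lam : ℂ) (R : ℝ) : Set ℂ :=
  {z ∈ escapingSet (expMap lam) | ∀ n : ℕ, R ≤ ((expMap lam)^[n] z).re}

open scoped NNReal Topology

theorem MonotoneOn.iterate_of_mapsTo {α : Type*} [Preorder α] {g : α → α} {s : Set α}
    (hg : MonotoneOn g s) (hs : MapsTo g s s) (n : ℕ) : MonotoneOn g^[n] s := by
  induction n with
  | zero => exact monotoneOn_id
  | succ n ih => rw [Function.iterate_succ']; exact hg.comp ih (hs.iterate n)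

section Koenigs

variable {lam' beta : ℝ} {Phi : ℝ → ℝ}

lemma log_div_of_fixedPoint (hl : 0 < lam') (hfix : lam' * Real.exp beta = beta) :
    Real.log (beta / lam') = beta := by
  rw [div_eq_of_eq_mul hl.ne' (by rw [mul_comm, hfix]), Real.log_exp]

lemma monotoneOn_log_div (hl : 0 < lam') (hbeta : 0 < beta) :
    MonotoneOn (fun y => Real.log (y / lam')) (Ici beta) := fun x hx y _ hxy =>
  Real.log_le_log (div_pos (hbeta.trans_le hx) hl) (by gcongr)

lemma mapsTo_log_div (hl : 0 < lam') (hbeta : 0 < beta) (hfix : lam' * Real.exp beta = beta) :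
    MapsTo (fun y => Real.log (y / lam')) (Ici beta) (Ici beta) := fun x hx => by
  simpa only [mem_Ici, log_div_of_fixedPoint hl hfix] using
    monotoneOn_log_div hl hbeta self_mem_Ici hx hx

lemma koenigs_monotoneOn (hl : 0 < lam') (hbeta : 0 < beta)
    (hfix : lam' * Real.exp beta = beta)
    (hPhi : ∀ x : ℝ, beta ≤ x →
      Tendsto (fun n : ℕ => beta ^ n * ((fun y => Real.log (y / lam'))^[n] x - beta))
        atTop (nhds (Phi x))) :
    MonotoneOn Phi (Ici beta) := fun x hx y hy hxy => by
  refine le_of_tendsto_of_tendsto' (hPhi x hx) (hPhi y hy) fun n => ?_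
  have := (monotoneOn_log_div hl hbeta).iterate_of_mapsTo (mapsTo_log_div hl hbeta hfix) n
    hx hy hxy
  gcongr

lemma koenigs_fixedPoint_eq_zero (hl : 0 < lam') (hfix : lam' * Real.exp beta = beta)
    (hPhi : Tendsto (fun n : ℕ => beta ^ n * ((fun y => Real.log (y / lam'))^[n] beta - beta))
        atTop (nhds (Phi beta))) :
    Phi beta = 0 := by
  refine tendsto_nhds_unique hPhi ?_
  have hfixed : ∀ n, (fun y => Real.log (y / lam'))^[n] beta = beta :=
    Function.iterate_fixed (f := fun y => Real.log (y / lam')) (log_div_of_fixedPoint hl hfix)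
  simp [hfixed]

end Koenigs

def IsDoublingNearZero (h : ℝ → ℝ) : Prop :=
  ∀ a : ℝ, 1 ≤ a → ∃ C > 0, ∃ δ > 0,
    ∀ t s : ℝ, 0 < t → t ≤ s → s ≤ a * t → s ≤ δ → h s ≤ C * h t

lemma isDoublingNearZero_of_monotoneOn {beta gamma : ℝ} {Phi h : ℝ → ℝ}
    (hbeta : 0 < beta) (hgamma : 0 ≤ gamma)
    (hmono : MonotoneOn Phi (Ici beta)) (hPhi_beta : Phi beta = 0)
    (hh : ∀ t : ℝ, 0 < t → beta ≤ 1 / t → h t = t ^ 2 * Phi (1 / t) ^ gamma) :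
    IsDoublingNearZero h := by
  intro a ha
  refine ⟨a ^ 2, by positivity, 1 / beta, by positivity, fun t s ht hts hsa hsδ => ?_⟩
  have hs : 0 < s := ht.trans_le hts
  have hbs : beta ≤ 1 / s := (le_one_div hbeta hs).2 hsδ
  have hst : 1 / s ≤ 1 / t := one_div_le_one_div_of_le ht hts
  have hbt : beta ≤ 1 / t := hbs.trans hst
  have hPhi_s : 0 ≤ Phi (1 / s) := hPhi_beta ▸ hmono self_mem_Ici hbs hbs
  rw [hh s hs hbs, hh t ht hbt]
  calc s ^ 2 * Phi (1 / s) ^ gamma ≤ (a * t) ^ 2 * Phi (1 / t) ^ gamma := by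
        gcongr
        exact hmono hbs hbt hst
    _ = a ^ 2 * (t ^ 2 * Phi (1 / t) ^ gamma) := by ring

lemma ediam_union_image_add_le {E : Type*} [SeminormedAddCommGroup E] (V : Set E) (v : E) :
    ediam (V ∪ (· + v) '' V) ≤ 2 * ediam V + ‖v‖ₑ := by
  rcases V.eq_empty_or_nonempty with rfl | ⟨x, hx⟩
  · simp
  calc ediam (V ∪ (· + v) '' V) ≤ ediam V + edist x (x + v) + ediam ((· + v) '' V) :=
        ediam_union_le_add_edist hx (mem_image_of_mem _ hx)
    _ = 2 * ediam V + ‖v‖ₑ := by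
        rw [(isometry_add_right v).ediam_image, edist_comm, edist_eq_enorm_sub,
          add_sub_cancel_left]
        ring

lemma enorm_le_ediam_union_image_add {E : Type*} [SeminormedAddCommGroup E] {V : Set E}
    (hV : V.Nonempty) (v : E) : ‖v‖ₑ ≤ ediam (V ∪ (· + v) '' V) := by
  obtain ⟨x, hx⟩ := hV
  calc ‖v‖ₑ = edist (x + v) x := by rw [edist_eq_enorm_sub, add_sub_cancel_left]
    _ ≤ _ := edist_le_ediam_of_mem (Or.inr (mem_image_of_mem _ hx)) (Or.inl hx)

lemma ediam_inter_preimage_le {X Y : Type*} [PseudoEMetricSpace X] [PseudoEMetricSpace Y]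
    {S : Set X} {f : X → Y} {K : ℝ≥0} (hf : AntilipschitzWith K (S.domRestrict f)) (U : Set Y) :
    ediam (S ∩ f ⁻¹' U) ≤ K * ediam U :=
  ediam_le fun x hx y hy =>
    (hf ⟨x, hx.1⟩ ⟨y, hy.1⟩).trans (by gcongr; exact edist_le_ediam_of_mem hx.2 hy.2)

lemma Complex.enorm_ofReal_toReal {x : ℝ≥0∞} (hx : x ≠ ∞) : ‖(x.toReal : ℂ)‖ₑ = x := by
  rw [← ofReal_norm, Complex.norm_real, Real.norm_of_nonneg ENNReal.toReal_nonneg,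
    ENNReal.ofReal_toReal hx]

/-- Padding `S ∩ f ⁻¹' U` with a translate makes its diameter at least `(K + 1) · diam U`, so that
the gauge only has to be compared at comparable scales: it is not known to be monotone. -/
def preimagePad (S : Set ℂ) (f : ℂ → ℂ) (K : ℝ≥0) (U : Set ℂ) : Set ℂ :=
  (S ∩ f ⁻¹' U) ∪ (· + (((K + 1) * ediam U).toReal : ℂ)) '' (S ∩ f ⁻¹' U)

section preimagePad

variable {S : Set ℂ} {f : ℂ → ℂ} {K : ℝ≥0} {U : Set ℂ}
lemma ediam_preimagePad_le (hf : AntilipschitzWith K (S.domRestrict f)) :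
    ediam (preimagePad S f K U) ≤ 3 * ((K + 1) * ediam U) := by
  rcases eq_or_ne (ediam U) ∞ with hU | hU
  · simp [hU]
  calc ediam (preimagePad S f K U) ≤ 2 * ediam (S ∩ f ⁻¹' U) + (K + 1) * ediam U := by
        rw [← Complex.enorm_ofReal_toReal (by finiteness : (K + 1) * ediam U ≠ ∞)]
        exact ediam_union_image_add_le _ _
    _ ≤ 2 * ((K + 1) * ediam U) + (K + 1) * ediam U := by
        gcongr
        exact (ediam_inter_preimage_le hf U).trans (by gcongr; exact le_self_add)
    _ = 3 * ((K + 1) * ediam U) := by ring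

lemma le_ediam_preimagePad (hU : ediam U ≠ ∞) (hV : (S ∩ f ⁻¹' U).Nonempty) :
    (K + 1) * ediam U ≤ ediam (preimagePad S f K U) := by
  rw [← Complex.enorm_ofReal_toReal (by finiteness : (K + 1) * ediam U ≠ ∞)]
  exact enorm_le_ediam_union_image_add hV _

lemma nonempty_inter_preimage_of_preimagePad (hW : (preimagePad S f K U).Nonempty) :
    (S ∩ f ⁻¹' U).Nonempty := by
  obtain ⟨x, hx | ⟨y, hy, -⟩⟩ := hW
  exacts [⟨x, hx⟩, ⟨y, hy⟩]

lemma iSup_gauge_preimagePad_le {h : ℝ → ℝ} (hh0 : h 0 = 0) {C δ₀ : ℝ} (hC : 0 ≤ C)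
    (hδ₀ : 0 ≤ δ₀)
    (hgauge : ∀ t s : ℝ, 0 < t → t ≤ s → s ≤ 3 * (K + 1) * t → s ≤ δ₀ → h s ≤ C * h t)
    (hf : AntilipschitzWith K (S.domRestrict f))
    (hU : 3 * ((K + 1) * ediam U) ≤ ENNReal.ofReal δ₀) :
    (⨆ _ : (preimagePad S f K U).Nonempty,
        ENNReal.ofReal (h (ediam (preimagePad S f K U)).toReal)) ≤
      ENNReal.ofReal C * ⨆ _ : U.Nonempty, ENNReal.ofReal (h (ediam U).toReal) := by
  refine iSup_le fun hW => ?_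
  obtain ⟨x, hxS, hxU⟩ := nonempty_inter_preimage_of_preimagePad hW
  rw [iSup_pos ⟨f x, hxU⟩]
  have hUfin : ediam U ≠ ∞ := ne_top_of_le_ne_top ENNReal.ofReal_ne_top <|
    le_trans (by rw [← mul_assoc]; exact le_mul_of_one_le_left' <|
      (by norm_num : (1 : ℝ≥0∞) ≤ 3).trans (le_mul_of_one_le_right' le_add_self)) hU
  have hupper := ediam_preimagePad_le (U := U) hf
  have hlower := le_ediam_preimagePad (K := K) hUfin ⟨x, hxS, hxU⟩
  rcases eq_or_ne (ediam U) 0 with hU0 | hU0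
  · rw [hU0, mul_zero, mul_zero, nonpos_iff_eq_zero] at hupper
    simp [hupper, hh0]
  set t := (ediam U).toReal
  set s := (ediam (preimagePad S f K U)).toReal
  have hWfin : ediam (preimagePad S f K U) ≠ ∞ := ne_top_of_le_ne_top (by finiteness) hupper
  have ht : 0 < t := ENNReal.toReal_pos hU0 hUfin
  have hK : ((K : ℝ≥0∞) + 1).toReal = K + 1 := by
    rw [ENNReal.toReal_add (by simp) (by simp)]; simp
  have hts : (K + 1) * t ≤ s := by
    simpa [t, s, ENNReal.toReal_mul, hK] using ENNReal.toReal_mono hWfin hlower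
  have hst : s ≤ 3 * (K + 1) * t := by
    simpa [t, s, ENNReal.toReal_mul, hK, mul_assoc] using
      ENNReal.toReal_mono (by finiteness) hupper
  have htδ : 3 * (K + 1) * t ≤ δ₀ := by
    simpa [t, ENNReal.toReal_mul, hK, mul_assoc, hδ₀] using
      ENNReal.toReal_mono ENNReal.ofReal_ne_top hU
  calc ENNReal.ofReal (h s) ≤ ENNReal.ofReal (C * h t) :=
        ENNReal.ofReal_le_ofReal (hgauge t s ht (le_trans (by nlinarith) hts) hst (hst.trans htδ))
    _ = ENNReal.ofReal C * ENNReal.ofReal (h t) := ENNReal.ofReal_mul hC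

end preimagePad

lemma gaugeMeasure_inter_preimage_le {h : ℝ → ℝ} (hh0 : h 0 = 0) {C δ₀ : ℝ} (hC : 0 < C)
    (hδ₀ : 0 < δ₀) {S : Set ℂ} {f : ℂ → ℂ} {K : ℝ≥0}
    (hgauge : ∀ t s : ℝ, 0 < t → t ≤ s → s ≤ 3 * (K + 1) * t → s ≤ δ₀ → h s ≤ C * h t)
    (hf : AntilipschitzWith K (S.domRestrict f)) (A : Set ℂ) :
    gaugeMeasure h (S ∩ f ⁻¹' A) ≤ ENNReal.ofReal C * gaugeMeasure h A := by
  simp only [gaugeMeasure, Measure.mkMetric_apply, ENNReal.mul_iSup,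
    ENNReal.mul_iInf_of_ne (ENNReal.ofReal_pos.2 hC).ne' ENNReal.ofReal_ne_top,
    ← ENNReal.tsum_mul_left]
  refine iSup₂_le fun ρ hρ => ?_
  have hδρ : 0 < min (ENNReal.ofReal δ₀) ρ := lt_min (ENNReal.ofReal_pos.2 hδ₀) hρ
  refine le_iSup₂_of_le (min (ENNReal.ofReal δ₀) ρ / (3 * (K + 1)))
    (ENNReal.div_pos hδρ.ne' (by finiteness)) ?_
  refine le_iInf₂ fun U hAU => le_iInf fun hUδ => ?_
  have hU : ∀ n, 3 * ((K + 1) * ediam (U n)) ≤ min (ENNReal.ofReal δ₀) ρ := fun n => by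
    rw [← mul_assoc]; exact ENNReal.mul_le_of_le_div' (hUδ n)
  have hcover : S ∩ f ⁻¹' A ⊆ ⋃ n, preimagePad S f K (U n) := fun x ⟨hxS, hxA⟩ => by
    obtain ⟨n, hn⟩ := mem_iUnion.1 (hAU hxA)
    exact mem_iUnion.2 ⟨n, Or.inl ⟨hxS, hn⟩⟩
  refine iInf₂_le_of_le _ hcover <| iInf_le_of_le
    (fun n => ediam_preimagePad_le hf |>.trans <| (hU n).trans <| min_le_right _ _) ?_
  exact ENNReal.tsum_le_tsum fun n => (iSup_gauge_preimagePad_le hh0 hC.le hδ₀.le hgauge hf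
    ((hU n).trans (min_le_left _ _))).trans_eq (ENNReal.mul_iSup _ _)

lemma gaugeMeasure_inter_preimage_eq_zero {h : ℝ → ℝ} (hh0 : h 0 = 0)
    (hd : IsDoublingNearZero h) {S : Set ℂ} {f : ℂ → ℂ} {K : ℝ≥0}
    (hf : AntilipschitzWith K (S.domRestrict f)) {A : Set ℂ} (hA : gaugeMeasure h A = 0) :
    gaugeMeasure h (S ∩ f ⁻¹' A) = 0 := by
  obtain ⟨C, hC, δ₀, hδ₀, hgauge⟩ := hd (3 * (K + 1)) (by linarith [K.coe_nonneg])
  simpa [hA] using gaugeMeasure_inter_preimage_le hh0 hC hδ₀ hgauge hf A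

def IsLocallyAntilipschitz {X Y : Type*} [PseudoEMetricSpace X] [PseudoEMetricSpace Y]
    (f : X → Y) : Prop :=
  ∀ x, ∃ K : ℝ≥0, ∃ S ∈ 𝓝 x, AntilipschitzWith K (S.domRestrict f)

lemma HasStrictDerivAt.exists_antilipschitzWith {f : ℂ → ℂ} {f' z : ℂ}
    (hf : HasStrictDerivAt f f' z) (hf' : f' ≠ 0) :
    ∃ K : ℝ≥0, ∃ S ∈ 𝓝 z, AntilipschitzWith K (S.domRestrict f) := by
  obtain ⟨S, hzS, hSo, hS⟩ := (hf.hasStrictFDerivAt_equiv hf').approximates_deriv_on_open_nhds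
  exact ⟨_, S, hSo.mem_nhds hzS, hS.antilipschitz <|
    (ContinuousLinearEquiv.subsingleton_or_nnnorm_symm_pos _).imp id fun h =>
      NNReal.half_lt_self (inv_pos.2 h).ne'⟩

lemma gaugeMeasure_preimage_eq_zero {h : ℝ → ℝ} (hh0 : h 0 = 0) (hd : IsDoublingNearZero h)
    {f : ℂ → ℂ} (hf : IsLocallyAntilipschitz f)
    {A : Set ℂ} (hA : gaugeMeasure h A = 0) : gaugeMeasure h (f ⁻¹' A) = 0 := by
  refine measure_null_of_locally_null _ fun z _ => ?_
  obtain ⟨K, S, hS, hfS⟩ := hf z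
  exact ⟨_, inter_mem_nhdsWithin _ hS, by
    rw [inter_comm]; exact gaugeMeasure_inter_preimage_eq_zero hh0 hd hfS hA⟩

lemma gaugeMeasure_preimage_iterate_eq_zero {h : ℝ → ℝ} (hh0 : h 0 = 0)
    (hd : IsDoublingNearZero h) {f : ℂ → ℂ}
    (hf : IsLocallyAntilipschitz f) {A : Set ℂ} (hA : gaugeMeasure h A = 0) (N : ℕ) :
    gaugeMeasure h (f^[N] ⁻¹' A) = 0 := by
  induction N with
  | zero => simpa using hA
  | succ N ih =>
    rw [Function.iterate_succ, preimage_comp]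
    exact gaugeMeasure_preimage_eq_zero hh0 hd hf ih

lemma iterate_mem_escapingSet {f : ℂ → ℂ} {z : ℂ} (hz : z ∈ escapingSet f) (N : ℕ) :
    f^[N] z ∈ escapingSet f := by
  refine (hz.comp (tendsto_add_atTop_nat N)).congr fun n => ?_
  simp [← Function.iterate_add_apply]

lemma hasStrictDerivAt_expMap (lam z : ℂ) : HasStrictDerivAt (expMap lam) (expMap lam z) z :=
  (Complex.hasStrictDerivAt_exp z).const_mul lam

lemma expMap_ne_zero {lam : ℂ} (hlam : lam ≠ 0) (z : ℂ) : expMap lam z ≠ 0 :=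
  mul_ne_zero hlam (Complex.exp_ne_zero z)

lemma norm_expMap (lam z : ℂ) : ‖expMap lam z‖ = ‖lam‖ * Real.exp z.re := by
  simp [expMap, Complex.norm_exp]

lemma escapingSet_subset_iUnion_preimage_escapingSetGE {lam : ℂ} (hlam : lam ≠ 0) (R : ℝ) :
    escapingSet (expMap lam) ⊆ ⋃ N : ℕ, (expMap lam)^[N] ⁻¹' escapingSetGE lam R := by
  intro z hz
  obtain ⟨N, hN⟩ := eventually_atTop.1 (tendsto_atTop.1 hz (‖lam‖ * Real.exp R))
  refine mem_iUnion.2 ⟨N, iterate_mem_escapingSet hz N, fun n => ?_⟩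
  have := hN (n + N + 1) (by omega)
  rw [Function.iterate_succ_apply', norm_expMap,
    mul_le_mul_iff_right₀ (norm_pos_iff.2 hlam), Real.exp_le_exp] at this
  rwa [← Function.iterate_add_apply]

theorem stmt_18_general (lam : ℂ) (hlam : lam ≠ 0)
    (lam' : ℝ) (hlam' : lam' ∈ Set.Ioo 0 (1 / Real.exp 1))
    (beta : ℝ) (hbeta : 1 < beta) (hfix : lam' * Real.exp beta = beta)
    (Phi : ℝ → ℝ)
    (hPhi : ∀ x : ℝ, beta ≤ x →
      Tendsto (fun n : ℕ => beta ^ n * ((fun y => Real.log (y / lam'))^[n] x - beta))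
        atTop (nhds (Phi x)))
    (gamma : ℝ) (hgamma : 0 < gamma) (R : ℝ)
    (h : ℝ → ℝ) (hh0 : h 0 = 0)
    (hh : ∀ t : ℝ, 0 < t → beta ≤ 1 / t → h t = t ^ 2 * Phi (1 / t) ^ gamma)
    (hzero : gaugeMeasure h (escapingSetGE lam R) = 0) :
    gaugeMeasure h (escapingSet (expMap lam)) = 0 := by
  have hbeta₀ : 0 < beta := one_pos.trans hbeta
  have hd : IsDoublingNearZero h :=
    isDoublingNearZero_of_monotoneOn hbeta₀ hgamma.le
      (koenigs_monotoneOn hlam'.1 hbeta₀ hfix hPhi)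
      (koenigs_fixedPoint_eq_zero hlam'.1 hfix (hPhi beta le_rfl)) hh
  have hloc : IsLocallyAntilipschitz (expMap lam) := fun z =>
    (hasStrictDerivAt_expMap lam z).exists_antilipschitzWith (expMap_ne_zero hlam z)
  exact measure_mono_null (escapingSet_subset_iUnion_preimage_escapingSetGE hlam R)
    (measure_iUnion_null fun N => gaugeMeasure_preimage_iterate_eq_zero hh0 hd hloc hzero N)

/-- Lemma 4.3: if `H^{h_{λ',γ}}(I_R(E_λ)) = 0` then
`H^{h_{λ',γ}}(I(E_λ)) = 0`. -/
theorem stmt_18 (lam : ℂ) (hlam : lam ≠ 0)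
    (lam' : ℝ) (hlam' : lam' ∈ Set.Ioo 0 (1 / Real.exp 1))
    (beta : ℝ) (hbeta : 1 < beta) (hfix : lam' * Real.exp beta = beta)
    (Phi : ℝ → ℝ)
    (hPhi : ∀ x : ℝ, beta ≤ x →
      Tendsto (fun n : ℕ => beta ^ n * ((fun y => Real.log (y / lam'))^[n] x - beta))
        atTop (nhds (Phi x)))
    (gamma : ℝ) (hgamma : 0 < gamma) (R : ℝ) (hR : 0 < R)
    (h : ℝ → ℝ) (hh0 : h 0 = 0)
    (hh : ∀ t : ℝ, 0 < t → beta ≤ 1 / t → h t = t ^ 2 * Phi (1 / t) ^ gamma)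
    (hzero : gaugeMeasure h (escapingSetGE lam R) = 0) :
    gaugeMeasure h (escapingSet (expMap lam)) = 0 :=
  stmt_18_general lam hlam lam' hlam' beta hbeta hfix Phi hPhi gamma hgamma R h hh0 hh hzero
end
end
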